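/- arXiv:1303.3293 — 9 statements merged into one kernel-verified Lean document; each statement's English description precedes it below -/
import Mathlib

section
/- Let v : [t₀, ∞) → ℝ be a positive continuous function with ∫_{t₀}^∞ v(t) dt = ∞ and ∫_{t₀}^t v(s) ds ≤ C·t^a for some positive constants C, a, and let λ > 0. Then every nontrivial solution u of (v(t)u')' + λ v(t) u = 0 on [t₀, ∞) has arbitrarily large zeros, i.e., for every T there exists t > T with u(t) = 0. -/
open Set Filter intervalIntegral Real

/-!
Suppose `u` has no zero beyond some time. Then the Riccati variable `w = v u' / u` satisfies
`w' = -λ v - w² / v`, so `w + λ V` decreases (`V` the primitive of `v`) and `w` becomes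
negative. Beyond that point `y = -1 / w > 0` satisfies `y' = -λ v y² - 1 / v`. By AM-GM
`y' ≤ -2 √λ y`, so `y` decays exponentially; on the other hand `y' ≤ -1 / v` and a
Cauchy–Schwarz argument give `T² ≤ y(T) V(2T) ≤ y(T) C (2T)^a`, so `y(T)` is bounded below
by a power of `T`, a contradiction.
-/

theorem antitoneOn_of_hasDerivAt_nonpos {s : Set ℝ} (hs : Convex ℝ s) {f f' : ℝ → ℝ}
    (hf : ∀ t ∈ s, HasDerivAt f (f' t) t) (hf' : ∀ t ∈ s, f' t ≤ 0) : AntitoneOn f s :=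
  antitoneOn_of_hasDerivWithinAt_nonpos hs (fun t ht => (hf t ht).continuousAt.continuousWithinAt)
    (fun t ht => (hf t (interior_subset ht)).hasDerivWithinAt)
    (fun t ht => hf' t (interior_subset ht))

theorem hasDerivAt_integral_of_continuousOn_Ici {v : ℝ → ℝ} {t₀ t : ℝ}
    (hv : ContinuousOn v (Ici t₀)) (ht : t₀ < t) :
    HasDerivAt (fun x => ∫ s in t₀..x, v s) (v t) t :=
  integral_hasDerivAt_right (hv.mono Icc_subset_Ici_self |>.intervalIntegrable_of_Icc ht.le)
    ((hv.mono Ioi_subset_Ici_self).stronglyMeasurableAtFilter isOpen_Ioi t ht)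
    (hv.continuousAt (Ici_mem_nhds ht))

theorem hasDerivAt_riccati {v u u' : ℝ → ℝ} {lam t : ℝ} (hv : v t ≠ 0) (hu0 : u t ≠ 0)
    (hu : HasDerivAt u (u' t) t)
    (hvu : HasDerivAt (fun s => v s * u' s) (-(lam * v t * u t)) t) :
    HasDerivAt (fun s => v s * u' s / u s) (-(lam * v t) - (v t * u' t / u t) ^ 2 / v t) t :=
  (hvu.div hu hu0).congr_deriv (by field_simp)

theorem hasDerivAt_neg_inv_riccati {v w : ℝ → ℝ} {lam t : ℝ} (hv : v t ≠ 0) (hw0 : w t ≠ 0)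
    (hw : HasDerivAt w (-(lam * v t) - w t ^ 2 / v t) t) :
    HasDerivAt (fun s => -(w s)⁻¹) (-(lam * v t * (-(w t)⁻¹) ^ 2) - (v t)⁻¹) t :=
  (hw.inv hw0).neg.congr_deriv (by field_simp)

theorem two_mul_sqrt_mul_le {lam v y : ℝ} (hlam : 0 ≤ lam) (hv : 0 < v) :
    2 * √lam * y ≤ lam * v * y ^ 2 + v⁻¹ := by
  have h := div_nonneg (sq_nonneg (√lam * v * y - 1)) hv.le
  have hsq : √lam ^ 2 = lam := sq_sqrt hlam
  rw [show (√lam * v * y - 1) ^ 2 / v = √lam ^ 2 * v * y ^ 2 - 2 * √lam * y + v⁻¹ by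
    field_simp; ring, hsq] at h
  linarith

theorem le_mul_exp_of_hasDerivAt_le {y y' : ℝ → ℝ} {c a b : ℝ} (hab : a ≤ b)
    (hy : ∀ t ∈ Icc a b, HasDerivAt y (y' t) t) (hy' : ∀ t ∈ Icc a b, y' t ≤ -c * y t) :
    y b ≤ y a * exp (-(c * (b - a))) := by
  have hanti : AntitoneOn (fun t => y t * exp (c * t)) (Icc a b) := by
    refine antitoneOn_of_hasDerivAt_nonpos (convex_Icc a b)
      (fun t ht => (hy t ht).mul (((hasDerivAt_id t).const_mul c).exp)) fun t ht => ?_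
    have h := mul_le_mul_of_nonneg_right (hy' t ht) (exp_pos (c * t)).le
    simp only [id, mul_one]
    linarith
  have h := hanti (left_mem_Icc.2 hab) (right_mem_Icc.2 hab) hab
  have hexp : exp (-(c * (b - a))) = exp (c * a) / exp (c * b) := by
    rw [← exp_sub]; ring_nf
  rw [hexp, mul_div_assoc', le_div_iff₀ (exp_pos _)]
  exact h

/-- A form of `(b - a)² ≤ (∫ₐᵇ v⁻¹) (∫ₐᵇ v)`: since `-v⁻¹ + 2 r - r² v ≤ 0`, each
`t ↦ y t + 2 r t - r² V t` is antitone, so a quadratic in `r` is nonnegative and its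
discriminant is nonpositive. -/
theorem sq_sub_le_of_hasDerivAt_le_neg_inv {y y' v V : ℝ → ℝ} {a b : ℝ} (hab : a ≤ b)
    (hv : ∀ t ∈ Icc a b, 0 < v t) (hV : ∀ t ∈ Icc a b, HasDerivAt V (v t) t)
    (hy : ∀ t ∈ Icc a b, HasDerivAt y (y' t) t) (hy' : ∀ t ∈ Icc a b, y' t ≤ -(v t)⁻¹) :
    (b - a) ^ 2 ≤ (y a - y b) * (V b - V a) := by
  have hquad : ∀ r : ℝ, 0 ≤ (V b - V a) * (r * r) + (-2 * (b - a)) * r + (y a - y b) := by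
    intro r
    have hanti : AntitoneOn (fun t => y t + 2 * r * t - r ^ 2 * V t) (Icc a b) := by
      refine antitoneOn_of_hasDerivAt_nonpos (convex_Icc a b)
        (fun t ht => (((hy t ht).add ((hasDerivAt_id t).const_mul (2 * r))).sub
          ((hV t ht).const_mul (r ^ 2)))) fun t ht => ?_
      have hvt := hv t ht
      have h := div_nonneg (sq_nonneg (r * v t - 1)) hvt.le
      rw [show (r * v t - 1) ^ 2 / v t = r ^ 2 * v t - 2 * r + (v t)⁻¹ by field_simp; ring] at h
      linarith [hy' t ht]
    have h := hanti (left_mem_Icc.2 hab) (right_mem_Icc.2 hab) hab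
    simp only at h
    linarith
  have h := discrim_le_zero hquad
  rw [discrim] at h
  linarith

theorem eventually_mul_exp_neg_mul_rpow_lt_sq {K c a : ℝ} (hc : 0 < c) :
    ∀ᶠ T in atTop, K * exp (-(c * T)) * T ^ a < T ^ 2 := by
  filter_upwards [(tendsto_exp_mul_div_rpow_atTop (a - 2) c hc).eventually_gt_atTop K,
    eventually_gt_atTop 0] with T hK hT
  have hTa : T ^ a = T ^ (a - 2) * T ^ 2 := by
    rw [← rpow_natCast, ← rpow_add hT]; norm_num
  have hpos : 0 < T ^ (a - 2) := rpow_pos_of_pos hT _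
  rw [lt_div_iff₀ hpos] at hK
  rw [hTa, exp_neg]
  have h2 : 0 < T ^ 2 := by positivity
  calc K * (exp (c * T))⁻¹ * (T ^ (a - 2) * T ^ 2)
      = (K * T ^ (a - 2)) * (exp (c * T))⁻¹ * T ^ 2 := by ring
    _ < exp (c * T) * (exp (c * T))⁻¹ * T ^ 2 := by gcongr
    _ = T ^ 2 := by field_simp

theorem eventually_neg_of_riccati {v V w : ℝ → ℝ} {lam s₀ : ℝ} (hlam : 0 < lam)
    (hv : ∀ t ∈ Ici s₀, 0 < v t) (hV : ∀ t ∈ Ici s₀, HasDerivAt V (v t) t)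
    (hV_top : Tendsto V atTop atTop)
    (hw : ∀ t ∈ Ici s₀, HasDerivAt w (-(lam * v t) - w t ^ 2 / v t) t) :
    ∀ᶠ t in atTop, w t < 0 := by
  have hanti : AntitoneOn (fun t => w t + lam * V t) (Ici s₀) :=
    antitoneOn_of_hasDerivAt_nonpos (convex_Ici s₀)
      (fun t ht => (hw t ht).add ((hV t ht).const_mul lam)) fun t ht => by
        have := div_nonneg (sq_nonneg (w t)) (hv t ht).le
        linarith
  filter_upwards [hV_top.eventually_gt_atTop ((w s₀ + lam * V s₀) / lam),
    eventually_ge_atTop s₀] with t hVt ht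
  have h := hanti self_mem_Ici ht ht
  rw [div_lt_iff₀ hlam] at hVt
  simp only at h
  linarith

theorem exists_nonpos_of_hasDerivAt_riccati_inv {v V y : ℝ → ℝ} {lam C a s : ℝ}
    (hlam : 0 < lam) (hv : ∀ t ∈ Ici s, 0 < v t) (hV : ∀ t ∈ Ici s, HasDerivAt V (v t) t)
    (hVs : 0 ≤ V s) (hV_growth : ∀ t ∈ Ici s, V t ≤ C * t ^ a)
    (hy : ∀ t ∈ Ici s, HasDerivAt y (-(lam * v t * y t ^ 2) - (v t)⁻¹) t) :
    ∃ t ∈ Ici s, y t ≤ 0 := by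
  by_contra! hy_pos
  set c := 2 * √lam
  have hdecay : ∀ T ∈ Ici s, y T ≤ y s * exp (c * s) * exp (-(c * T)) := by
    intro T hT
    have h := le_mul_exp_of_hasDerivAt_le (c := c) hT (fun t ht => hy t ht.1) fun t ht => by
      linarith [two_mul_sqrt_mul_le (y := y t) hlam.le (hv t ht.1)]
    rwa [mul_assoc, ← exp_add, show c * s + -(c * T) = -(c * (T - s)) by ring]
  have hV_mono : MonotoneOn V (Ici s) := fun t ht t' ht' htt' => neg_le_neg_iff.1 <|
    antitoneOn_of_hasDerivAt_nonpos (convex_Ici s) (fun t ht => (hV t ht).neg)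
      (fun t ht => neg_nonpos.2 (hv t ht).le) ht ht' htt'
  have hsq_le : ∀ T ∈ Ici s, 0 < T → T ^ 2 ≤ y T * (C * 2 ^ a * T ^ a) := by
    intro T (hT : s ≤ T) hTpos
    have hT2 : T ≤ 2 * T := by linarith
    have hIcc : Icc T (2 * T) ⊆ Ici s := Icc_subset_Ici_iff hT2 |>.2 hT
    have h := sq_sub_le_of_hasDerivAt_le_neg_inv hT2 (fun t ht => hv t (hIcc ht))
      (fun t ht => hV t (hIcc ht)) (fun t ht => hy t (hIcc ht)) fun t ht => by
        have := mul_nonneg (mul_nonneg hlam.le (hv t (hIcc ht)).le) (sq_nonneg (y t))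
        linarith
    have hV2T : V (2 * T) ≤ C * 2 ^ a * T ^ a := by
      rw [mul_assoc, ← mul_rpow zero_le_two hTpos.le]
      exact hV_growth (2 * T) (hIcc (right_mem_Icc.2 hT2))
    have hVT := hV_mono self_mem_Ici hT hT
    have hV_mono_T := hV_mono hT (hIcc (right_mem_Icc.2 hT2)) hT2
    nlinarith [hy_pos T hT, hy_pos (2 * T) (hIcc (right_mem_Icc.2 hT2))]
  obtain ⟨T, hT_lt, hT_ge⟩ := ((eventually_mul_exp_neg_mul_rpow_lt_sq
    (K := y s * exp (c * s) * (C * 2 ^ a)) (a := a) (show 0 < c by positivity)).and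
      (eventually_ge_atTop (max s 1))).exists
  have hT : T ∈ Ici s := le_trans (le_max_left _ _) hT_ge
  have hTpos : 0 < T := by linarith [le_max_right s 1]
  have hsq := hsq_le T hT hTpos
  have hbound_pos : 0 < C * 2 ^ a * T ^ a :=
    (pos_iff_pos_of_mul_pos (lt_of_lt_of_le (by positivity) hsq)).1 (hy_pos T hT)
  have hdecay_T := mul_le_mul_of_nonneg_right (hdecay T hT) hbound_pos.le
  linarith

theorem stmt0_general (t₀ C a lam : ℝ) (hlam : 0 < lam)
    (v u u' : ℝ → ℝ)
    (hv_cont : ContinuousOn v (Ici t₀))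
    (hv_pos : ∀ t ∈ Ici t₀, 0 < v t)
    (hv_div : Tendsto (fun T => ∫ s in t₀..T, v s) atTop atTop)
    (hv_growth : ∀ t ∈ Ici t₀, (∫ s in t₀..t, v s) ≤ C * t ^ a)
    (hu : ∀ t ∈ Ici t₀, HasDerivAt u (u' t) t)
    (hode : ∀ t ∈ Ici t₀, HasDerivAt (fun s => v s * u' s) (-(lam * v t * u t)) t) :
    ∀ T : ℝ, ∃ t, T < t ∧ t₀ ≤ t ∧ u t = 0 := by
  intro T₀
  by_contra! hne
  set T₁ := max T₀ t₀ + 1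
  have hT₁ : ∀ t ∈ Ici T₁, T₀ < t ∧ t₀ < t := fun t (ht : T₁ ≤ t) =>
    ⟨by linarith [le_max_left T₀ t₀], by linarith [le_max_right T₀ t₀]⟩
  have hv : ∀ t ∈ Ici T₁, 0 < v t := fun t ht => hv_pos t (hT₁ t ht).2.le
  set V := fun t => ∫ s in t₀..t, v s
  have hV : ∀ t ∈ Ici T₁, HasDerivAt V (v t) t := fun t ht =>
    hasDerivAt_integral_of_continuousOn_Ici hv_cont (hT₁ t ht).2
  set w := fun t => v t * u' t / u t
  have hw : ∀ t ∈ Ici T₁, HasDerivAt w (-(lam * v t) - w t ^ 2 / v t) t := fun t ht =>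
    hasDerivAt_riccati (hv t ht).ne' (hne t (hT₁ t ht).1 (hT₁ t ht).2.le)
      (hu t (hT₁ t ht).2.le) (hode t (hT₁ t ht).2.le)
  obtain ⟨T₂, hT₂⟩ := eventually_atTop.1
    ((eventually_neg_of_riccati hlam hv hV hv_div hw).and (eventually_ge_atTop T₁))
  have hT₂₁ : ∀ t ∈ Ici T₂, t ∈ Ici T₁ := fun t ht => (hT₂ t ht).2
  obtain ⟨t, ht, hyt⟩ := exists_nonpos_of_hasDerivAt_riccati_inv (y := fun t => -(w t)⁻¹) hlam
    (fun t ht => hv t (hT₂₁ t ht)) (fun t ht => hV t (hT₂₁ t ht))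
    (integral_nonneg (hT₁ T₂ (hT₂₁ T₂ self_mem_Ici)).2.le fun s hs => (hv_pos s hs.1).le)
    (fun t ht => hv_growth t (hT₁ t (hT₂₁ t ht)).2.le) fun t ht =>
      hasDerivAt_neg_inv_riccati (hv t (hT₂₁ t ht)).ne' (hT₂ t ht).1.ne (hw t (hT₂₁ t ht))
  have hwt := (hT₂ t ht).1
  simp only [neg_nonpos, inv_nonneg] at hyt
  linarith

/-- Oscillation criterion: if `v` is positive continuous on `[t₀, ∞)` with divergent
integral and polynomially bounded primitive, then every nontrivial solution of
`(v u')' + λ v u = 0` has arbitrarily large zeros. -/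
theorem stmt0 (t₀ C a lam : ℝ) (ht₀ : 0 < t₀) (hC : 0 < C) (ha : 0 < a) (hlam : 0 < lam)
    (v u u' : ℝ → ℝ)
    (hv_cont : ContinuousOn v (Ici t₀))
    (hv_pos : ∀ t ∈ Ici t₀, 0 < v t)
    (hv_div : Tendsto (fun T => ∫ s in t₀..T, v s) atTop atTop)
    (hv_growth : ∀ t ∈ Ici t₀, (∫ s in t₀..t, v s) ≤ C * t ^ a)
    (hu : ∀ t ∈ Ici t₀, HasDerivAt u (u' t) t)
    (hode : ∀ t ∈ Ici t₀, HasDerivAt (fun s => v s * u' s) (-(lam * v t * u t)) t)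
    (hnontriv : ∃ t ∈ Ici t₀, u t ≠ 0) :
    ∀ T : ℝ, ∃ t, T < t ∧ t₀ ≤ t ∧ u t = 0 :=
  stmt0_general t₀ C a lam hlam v u u' hv_cont hv_pos hv_div hv_growth hu hode
end

section
/- Let r : [t₀, ∞) → ℝ be continuous with 0 < R/2 < r(t) < R for all t in [t₀, ∞), let n ≥ 2 and λ > 0. Then every nontrivial solution u of (r(t)^{n-1} u')' + λ r(t)^{n-1} u = 0 on [t₀, ∞) has arbitrarily large zeros. -/
/-!
Consider `(p u')' = -q u` with `0 ≤ p ≤ M` and `q ≥ c > 0`. If `u` had no zeros near `∞`, the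
Riccati variable `w = p u' / u` would satisfy `w' = -q - p (u' / u)² ≤ -c`, so `w → -∞`; in
particular `w < 0` eventually. Then `1 / w = u / (p u')` has derivative `1 / p + q u² / (p u')² ≥ 1 / M`,
so `1 / w → +∞`, contradicting `w < 0`. The theorem is the case `p = r ^ (n - 1)`, `q = λ p`.
-/

open Set Filter

theorem tendsto_atTop_of_hasDerivAt_ge {f f' : ℝ → ℝ} {d : ℝ} (hd : 0 < d)
    (hf : ∀ᶠ t in atTop, HasDerivAt f (f' t) t) (hf' : ∀ᶠ t in atTop, d ≤ f' t) :
    Tendsto f atTop atTop := by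
  obtain ⟨a, ha⟩ := eventually_atTop.1 (hf.and hf')
  have hgrowth : ∀ t ∈ Ici a, d * (t - a) ≤ f t - f a :=
    fun t ht => (convex_Ici a).mul_sub_le_image_sub_of_le_deriv
      (fun x hx => (ha x hx).1.continuousAt.continuousWithinAt)
      (fun x hx => (ha x (interior_subset hx)).1.differentiableAt.differentiableWithinAt)
      (fun x hx => (ha x (interior_subset hx)).1.deriv ▸ (ha x (interior_subset hx)).2)
      a self_mem_Ici t ht ht
  have hlin : Tendsto (fun t => f a + d * (t - a)) atTop atTop :=
    tendsto_atTop_add_const_left _ _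
      ((tendsto_atTop_add_const_right _ (-a) tendsto_id).const_mul_atTop hd)
  exact tendsto_atTop_mono' atTop
    ((eventually_ge_atTop a).mono fun t ht => by linarith [hgrowth t ht]) hlin

namespace SturmLiouville

variable {p q u u' : ℝ → ℝ} {c : ℝ}

theorem tendsto_riccati_atBot (hc : 0 < c)
    (hu : ∀ᶠ t in atTop, HasDerivAt u (u' t) t)
    (hpu : ∀ᶠ t in atTop, HasDerivAt (fun s => p s * u' s) (-(q t * u t)) t)
    (hp : ∀ᶠ t in atTop, 0 ≤ p t) (hq : ∀ᶠ t in atTop, c ≤ q t)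
    (hne : ∀ᶠ t in atTop, u t ≠ 0) :
    Tendsto (fun t => p t * u' t / u t) atTop atBot := by
  rw [← tendsto_neg_atTop_iff]
  refine tendsto_atTop_of_hasDerivAt_ge
    (f' := fun t => -((-(q t * u t) * u t - p t * u' t * u' t) / u t ^ 2)) hc ?_ ?_
  · filter_upwards [hu, hpu, hne] with t hut hput hnet
    exact (hput.fun_div hut hnet).neg
  · filter_upwards [hp, hq, hne] with t hpt hqt hnet
    rw [le_neg, div_le_iff₀ (by positivity)]
    nlinarith [mul_nonneg hpt (sq_nonneg (u' t)), sq_nonneg (u t)]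

theorem frequently_atTop_eq_zero {M : ℝ} (hc : 0 < c) (hM : 0 < M)
    (hu : ∀ᶠ t in atTop, HasDerivAt u (u' t) t)
    (hpu : ∀ᶠ t in atTop, HasDerivAt (fun s => p s * u' s) (-(q t * u t)) t)
    (hp : ∀ᶠ t in atTop, 0 ≤ p t) (hpM : ∀ᶠ t in atTop, p t ≤ M)
    (hq : ∀ᶠ t in atTop, c ≤ q t) :
    ∃ᶠ t in atTop, u t = 0 := by
  intro hne
  have hw : ∀ᶠ t in atTop, p t * u' t / u t < 0 :=
    (tendsto_riccati_atBot hc hu hpu hp hq hne).eventually (eventually_lt_atBot 0)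
  have hpu' : ∀ᶠ t in atTop, p t * u' t ≠ 0 :=
    hw.mono fun t hwt h => by simp [h] at hwt
  have hg : Tendsto (fun t => u t / (p t * u' t)) atTop atTop := by
    refine tendsto_atTop_of_hasDerivAt_ge
      (f' := fun t => (u' t * (p t * u' t) - u t * -(q t * u t)) / (p t * u' t) ^ 2)
      (one_div_pos.2 hM) ?_ ?_
    · filter_upwards [hu, hpu, hpu'] with t hut hput hput'
      exact hut.fun_div hput hput'
    · filter_upwards [hp, hpM, hq, hpu'] with t hpt hpMt hqt hput'
      rw [div_le_div_iff₀ hM (by positivity)]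
      nlinarith [mul_le_mul_of_nonneg_right hpMt (mul_nonneg hpt (sq_nonneg (u' t))),
        mul_nonneg (mul_nonneg (hc.le.trans hqt) (sq_nonneg (u t))) hM.le]
  obtain ⟨t, hgt, hwt⟩ := ((hg.eventually (eventually_gt_atTop 0)).and hw).exists
  have hinv := inv_lt_zero.2 hwt
  rw [inv_div] at hinv
  exact hgt.not_gt hinv

end SturmLiouville

theorem stmt1_general (t₀ R lam : ℝ) (n : ℕ) (hR : 0 < R) (hlam : 0 < lam)
    (r u u' : ℝ → ℝ)
    (hr : ∀ t ∈ Ici t₀, R / 2 < r t ∧ r t < R)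
    (hu : ∀ t ∈ Ici t₀, HasDerivAt u (u' t) t)
    (hode : ∀ t ∈ Ici t₀,
      HasDerivAt (fun s => r s ^ (n - 1) * u' s) (-(lam * r t ^ (n - 1) * u t)) t) :
    ∀ T : ℝ, ∃ t, T < t ∧ t₀ ≤ t ∧ u t = 0 := by
  have hr' : ∀ᶠ t in atTop, R / 2 < r t ∧ r t < R := (eventually_ge_atTop t₀).mono hr
  have hR2 : 0 ≤ R / 2 := by positivity
  have hzeros : ∃ᶠ t in atTop, u t = 0 :=
    SturmLiouville.frequently_atTop_eq_zero
      (p := fun t => r t ^ (n - 1)) (q := fun t => lam * r t ^ (n - 1))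
      (c := lam * (R / 2) ^ (n - 1)) (M := R ^ (n - 1)) (by positivity) (by positivity)
      ((eventually_ge_atTop t₀).mono hu) ((eventually_ge_atTop t₀).mono hode)
      (hr'.mono fun t ht => pow_nonneg (hR2.trans ht.1.le) _)
      (hr'.mono fun t ht => pow_le_pow_left₀ (hR2.trans ht.1.le) ht.2.le _)
      (hr'.mono fun t ht => by gcongr; exact ht.1.le)
  intro T
  obtain ⟨t, hut, hTt⟩ := (hzeros.and_eventually (eventually_gt_atTop (max T t₀))).exists
  exact ⟨t, (le_max_left T t₀).trans_lt hTt, (le_max_right T t₀).trans hTt.le, hut⟩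

/-- If `R/2 < r(t) < R` on `[t₀, ∞)`, `n ≥ 2`, `λ > 0`, then every nontrivial solution of
`(r^{n-1} u')' + λ r^{n-1} u = 0` has arbitrarily large zeros. -/
theorem stmt1 (t₀ R lam : ℝ) (n : ℕ) (hn : 2 ≤ n) (hR : 0 < R) (hlam : 0 < lam)
    (r u u' : ℝ → ℝ)
    (hr_cont : ContinuousOn r (Ici t₀))
    (hr : ∀ t ∈ Ici t₀, R / 2 < r t ∧ r t < R)
    (hu : ∀ t ∈ Ici t₀, HasDerivAt u (u' t) t)
    (hode : ∀ t ∈ Ici t₀,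
      HasDerivAt (fun s => r s ^ (n - 1) * u' s) (-(lam * r t ^ (n - 1) * u t)) t)
    (hnontriv : ∃ t ∈ Ici t₀, u t ≠ 0) :
    ∀ T : ℝ, ∃ t, T < t ∧ t₀ ≤ t ∧ u t = 0 :=
  stmt1_general t₀ R lam n hR hlam r u u' hr hu hode
end

section
/- (Sturm–Picone comparison) Let p, p₁, q, q₁ be continuous on an interval I with p(t) ≥ p₁(t) > 0 and q₁(t) ≥ q(t) for all t ∈ I. Let x be a nontrivial solution of (p x')' + q x = 0 and y a nontrivial solution of (p₁ y')' + q₁ y = 0 on I. If t₁ < t₂ are consecutive zeros of x in I, then either y has a zero in the open interval (t₁, t₂), or there exists d ∈ ℝ with y = d·x on (t₁, t₂). -/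
open Set

open Filter Topology NNReal

/-!
Picone's function `F = x (p x') - x² (p₁ y') / y` is defined where `y ≠ 0`, and its derivative is
`(q₁ - q) x² + (p - p₁) x'² + p₁ (x' y - x y')² / y² ≥ 0`. If `y` has no zero in `(t₁, t₂)`, then
`F` is monotone there and tends to `0` at both ends, because `x` vanishes at `t₁` and `t₂` while
`y` cannot have a double zero (uniqueness for the first-order system in `(y, p₁ y')`). So `F ≡ 0`,
hence its derivative vanishes, so the Wronskian `x' y - x y'` vanishes and `y / x` is constant.
-/

theorem lipschitzWith_sturmLiouvilleField {a b : ℝ} {K : ℝ≥0} (ha : |a| ≤ K) (hb : |b| ≤ K) :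
    LipschitzWith K fun w : ℝ × ℝ => (a * w.2, -b * w.1) := by
  have h := ((lipschitzWith_smul (β := ℝ) a).comp LipschitzWith.prod_snd).prodMk
    ((lipschitzWith_smul (β := ℝ) (-b)).comp LipschitzWith.prod_fst)
  refine h.weaken ?_
  simp only [mul_one, max_le_iff, ← NNReal.coe_le_coe, coe_nnnorm, Real.norm_eq_abs, abs_neg]
  exact ⟨ha, hb⟩

theorem eqOn_zero_of_sturmLiouville {p q z z' : ℝ → ℝ} {a b t₀ : ℝ}
    (hp : ContinuousOn p (Icc a b)) (hp_pos : ∀ t ∈ Icc a b, 0 < p t)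
    (hq : ContinuousOn q (Icc a b)) (hz : ∀ t ∈ Icc a b, HasDerivAt z (z' t) t)
    (hzode : ∀ t ∈ Icc a b, HasDerivAt (fun s => p s * z' s) (-(q t * z t)) t)
    (ht₀ : t₀ ∈ Icc a b) (hz₀ : z t₀ = 0) (hz'₀ : z' t₀ = 0) :
    EqOn z 0 (Icc a b) := by
  obtain ⟨C, hC⟩ := isCompact_Icc.exists_bound_of_continuousOn
    ((hp.inv₀ fun t ht => (hp_pos t ht).ne').prodMk hq)
  set v : ℝ → ℝ × ℝ → ℝ × ℝ := fun t w => ((p t)⁻¹ * w.2, -q t * w.1)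
  have hv : ∀ t ∈ Icc a b, LipschitzOnWith C.toNNReal (v t) univ := fun t ht =>
    have hCt := (hC t ht).trans (Real.le_coe_toNNReal C)
    (lipschitzWith_sturmLiouvilleField ((le_max_left _ _).trans hCt)
      ((le_max_right _ _).trans hCt)).lipschitzOnWith
  set f : ℝ → ℝ × ℝ := fun t => (z t, p t * z' t)
  have hf : ∀ t ∈ Icc a b, HasDerivAt f (v t (f t)) t := fun t ht => by
    convert (hz t ht).prodMk (hzode t ht) using 1
    simp [v, f, inv_mul_cancel_left₀ (hp_pos t ht).ne']
  have hf_cont : ContinuousOn f (Icc a b) := fun t ht => (hf t ht).continuousAt.continuousWithinAt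
  have h0 : ∀ t, HasDerivAt (fun _ : ℝ => (0 : ℝ × ℝ)) (v t 0) t := fun t => by
    rw [show v t 0 = 0 by simp [v]]
    exact hasDerivAt_const t 0
  have hf₀ : f t₀ = 0 := by simp [f, hz₀, hz'₀]
  have hleft : EqOn f 0 (Icc a t₀) :=
    ODE_solution_unique_of_mem_Icc_left (s := fun _ => univ)
      (fun t ht => hv t ⟨ht.1.le, ht.2.trans ht₀.2⟩)
      (hf_cont.mono (Icc_subset_Icc_right ht₀.2))
      (fun t ht => (hf t ⟨ht.1.le, ht.2.trans ht₀.2⟩).hasDerivWithinAt) (fun _ _ => mem_univ _)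
      continuousOn_const (fun t _ => (h0 t).hasDerivWithinAt) (fun _ _ => mem_univ _) hf₀
  have hright : EqOn f 0 (Icc t₀ b) :=
    ODE_solution_unique_of_mem_Icc_right (s := fun _ => univ)
      (fun t ht => hv t ⟨ht₀.1.trans ht.1, ht.2.le⟩)
      (hf_cont.mono (Icc_subset_Icc_left ht₀.1))
      (fun t ht => (hf t ⟨ht₀.1.trans ht.1, ht.2.le⟩).hasDerivWithinAt) (fun _ _ => mem_univ _)
      continuousOn_const (fun t _ => (h0 t).hasDerivWithinAt) (fun _ _ => mem_univ _) hf₀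
  intro t ht
  rcases le_total t t₀ with h | h
  · exact congrArg Prod.fst (hleft ⟨ht.1, h⟩)
  · exact congrArg Prod.fst (hright ⟨h, ht.2⟩)

theorem tendsto_sq_mul_div_nhdsNE {f g u : ℝ → ℝ} {f' g' t₀ : ℝ} (hf : HasDerivAt f f' t₀)
    (hf₀ : f t₀ = 0) (hg : HasDerivAt g g' t₀) (hg₀ : g t₀ ≠ 0 ∨ g' ≠ 0)
    (hu : ContinuousAt u t₀) :
    Tendsto (fun t => f t ^ 2 * u t / g t) (𝓝[≠] t₀) (𝓝 0) := by
  by_cases hgt₀ : g t₀ = 0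
  · have hg' : g' ≠ 0 := hg₀.resolve_left (not_not.2 hgt₀)
    have hsub : Tendsto (fun t => t - t₀) (𝓝[≠] t₀) (𝓝 0) :=
      ((continuous_sub_right t₀).tendsto' t₀ 0 (sub_self t₀)).mono_left nhdsWithin_le_nhds
    have key : Tendsto (fun t => slope f t₀ t ^ 2 * u t * ((t - t₀) / slope g t₀ t)) (𝓝[≠] t₀)
        (𝓝 (f' ^ 2 * u t₀ * (0 / g'))) :=
      (((hasDerivAt_iff_tendsto_slope.1 hf).pow 2).mul
        (hu.tendsto.mono_left nhdsWithin_le_nhds)).mul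
        (hsub.div (hasDerivAt_iff_tendsto_slope.1 hg) hg')
    rw [zero_div, mul_zero] at key
    refine key.congr' (eventually_nhdsWithin_of_forall fun t ht => ?_)
    have ht' : t - t₀ ≠ 0 := sub_ne_zero.2 ht
    -- no `g t ≠ 0` is needed: if `g t = 0`, both sides are `0` since `_ / 0 = 0`
    rw [slope_def_field, slope_def_field, hf₀, hgt₀, sub_zero, sub_zero]
    field_simp
  · have h : ContinuousAt (fun t => f t ^ 2 * u t / g t) t₀ :=
      ((hf.continuousAt.pow 2).mul hu).div hg.continuousAt hgt₀
    simpa [hf₀] using h.tendsto.mono_left nhdsWithin_le_nhds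

theorem MonotoneOn.eqOn_of_tendsto_nhdsGT_nhdsLT {β : Type*} [PartialOrder β] [TopologicalSpace β]
    [OrderClosedTopology β] {f : ℝ → β} {a b : ℝ} {c : β} (hf : MonotoneOn f (Ioo a b))
    (ha : Tendsto f (𝓝[>] a) (𝓝 c)) (hb : Tendsto f (𝓝[<] b) (𝓝 c)) :
    EqOn f (fun _ => c) (Ioo a b) := fun _ ht =>
  le_antisymm
    (ge_of_tendsto hb (mem_of_superset (Ioo_mem_nhdsLT ht.2) fun _ hs =>
      hf ht ⟨ht.1.trans hs.1, hs.2⟩ hs.1.le))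
    (le_of_tendsto ha (mem_of_superset (Ioo_mem_nhdsGT ht.1) fun _ hs =>
      hf ⟨hs.1, hs.2.trans ht.2⟩ ht hs.2.le))

theorem exists_eq_const_mul_of_wronskian_eq_zero {s : Set ℝ} {x x' y y' : ℝ → ℝ} (hs : IsOpen s)
    (hs' : IsPreconnected s) (hx : ∀ t ∈ s, HasDerivAt x (x' t) t)
    (hy : ∀ t ∈ s, HasDerivAt y (y' t) t) (hx₀ : ∀ t ∈ s, x t ≠ 0)
    (hW : ∀ t ∈ s, x' t * y t - x t * y' t = 0) :
    ∃ d, ∀ t ∈ s, y t = d * x t := by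
  have hquot : ∀ t ∈ s, HasDerivAt (fun t => y t / x t) 0 t := fun t ht => by
    have := (hy t ht).div (hx t ht) (hx₀ t ht)
    rwa [show y' t * x t - y t * x' t = 0 by linarith [hW t ht], zero_div] at this
  obtain ⟨d, hd⟩ := hs.exists_is_const_of_deriv_eq_zero hs'
    (fun t ht => (hquot t ht).differentiableAt.differentiableWithinAt)
    (fun t ht => (hquot t ht).deriv)
  exact ⟨d, fun t ht => by rw [← hd t ht, div_mul_cancel₀ _ (hx₀ t ht)]⟩

noncomputable def piconeFun (p p₁ x x' y y' : ℝ → ℝ) (t : ℝ) : ℝ :=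
  x t * (p t * x' t) - x t ^ 2 * (p₁ t * y' t) / y t

section Picone

variable {p p₁ q q₁ x x' y y' : ℝ → ℝ}

theorem hasDerivAt_piconeFun {t : ℝ} (hx : HasDerivAt x (x' t) t)
    (hxode : HasDerivAt (fun s => p s * x' s) (-(q t * x t)) t) (hy : HasDerivAt y (y' t) t)
    (hyode : HasDerivAt (fun s => p₁ s * y' s) (-(q₁ t * y t)) t) (hyt : y t ≠ 0) :
    HasDerivAt (piconeFun p p₁ x x' y y') ((q₁ t - q t) * x t ^ 2 + (p t - p₁ t) * x' t ^ 2 +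
      p₁ t * (x' t * y t - x t * y' t) ^ 2 / y t ^ 2) t := by
  refine ((hx.mul hxode).sub (((hx.pow 2).mul hyode).div hy hyt)).congr_deriv ?_
  simp only [Pi.mul_apply, Pi.pow_apply]
  field_simp
  ring

theorem tendsto_piconeFun_nhdsNE {t₀ : ℝ} (hx : HasDerivAt x (x' t₀) t₀) (hx₀ : x t₀ = 0)
    (hpx : ContinuousAt (fun s => p s * x' s) t₀) (hy : HasDerivAt y (y' t₀) t₀)
    (hy₀ : y t₀ ≠ 0 ∨ y' t₀ ≠ 0) (hpy : ContinuousAt (fun s => p₁ s * y' s) t₀) :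
    Tendsto (piconeFun p p₁ x x' y y') (𝓝[≠] t₀) (𝓝 0) := by
  have h : Tendsto (fun t => x t * (p t * x' t)) (𝓝[≠] t₀) (𝓝 0) := by
    have h : ContinuousAt (fun t => x t * (p t * x' t)) t₀ := hx.continuousAt.mul hpx
    simpa [hx₀] using h.tendsto.mono_left nhdsWithin_le_nhds
  have := h.sub (tendsto_sq_mul_div_nhdsNE hx hx₀ hy hy₀ hpy)
  rwa [sub_zero] at this

theorem wronskian_eq_zero_of_picone {a b : ℝ} (hpp₁ : ∀ t ∈ Ioo a b, p₁ t ≤ p t)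
    (hp₁_pos : ∀ t ∈ Ioo a b, 0 < p₁ t) (hqq₁ : ∀ t ∈ Ioo a b, q t ≤ q₁ t)
    (hx : ∀ t ∈ Icc a b, HasDerivAt x (x' t) t)
    (hxode : ∀ t ∈ Icc a b, HasDerivAt (fun s => p s * x' s) (-(q t * x t)) t)
    (hy : ∀ t ∈ Icc a b, HasDerivAt y (y' t) t)
    (hyode : ∀ t ∈ Icc a b, HasDerivAt (fun s => p₁ s * y' s) (-(q₁ t * y t)) t)
    (hxa : x a = 0) (hxb : x b = 0) (hya : y a ≠ 0 ∨ y' a ≠ 0) (hyb : y b ≠ 0 ∨ y' b ≠ 0)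
    (hy₀ : ∀ t ∈ Ioo a b, y t ≠ 0) :
    ∀ t ∈ Ioo a b, x' t * y t - x t * y' t = 0 := by
  intro t ht
  have ha : a ∈ Icc a b := left_mem_Icc.2 (ht.1.trans ht.2).le
  have hb : b ∈ Icc a b := right_mem_Icc.2 (ht.1.trans ht.2).le
  set G : ℝ → ℝ := fun s => (q₁ s - q s) * x s ^ 2 + (p s - p₁ s) * x' s ^ 2 +
    p₁ s * (x' s * y s - x s * y' s) ^ 2 / y s ^ 2
  have hF : ∀ s ∈ Ioo a b, HasDerivAt (piconeFun p p₁ x x' y y') (G s) s := fun s hs =>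
    have hs' := Ioo_subset_Icc_self hs
    hasDerivAt_piconeFun (hx s hs') (hxode s hs') (hy s hs') (hyode s hs') (hy₀ s hs)
  have hterms : ∀ s ∈ Ioo a b, 0 ≤ (q₁ s - q s) * x s ^ 2 ∧ 0 ≤ (p s - p₁ s) * x' s ^ 2 ∧
      0 ≤ p₁ s * (x' s * y s - x s * y' s) ^ 2 / y s ^ 2 := fun s hs =>
    ⟨mul_nonneg (sub_nonneg.2 (hqq₁ s hs)) (sq_nonneg _),
      mul_nonneg (sub_nonneg.2 (hpp₁ s hs)) (sq_nonneg _),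
      div_nonneg (mul_nonneg (hp₁_pos s hs).le (sq_nonneg _)) (sq_nonneg _)⟩
  have hmono : MonotoneOn (piconeFun p p₁ x x' y y') (Ioo a b) := by
    refine monotoneOn_of_hasDerivWithinAt_nonneg (f' := G) (convex_Ioo a b)
      (fun s hs => (hF s hs).continuousAt.continuousWithinAt) (fun s hs => ?_) (fun s hs => ?_)
    all_goals rw [interior_Ioo] at hs
    · exact (hF s hs).hasDerivWithinAt
    · obtain ⟨h₁, h₂, h₃⟩ := hterms s hs
      exact add_nonneg (add_nonneg h₁ h₂) h₃
  have hF₀ := hmono.eqOn_of_tendsto_nhdsGT_nhdsLT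
    ((tendsto_piconeFun_nhdsNE (hx a ha) hxa (hxode a ha).continuousAt (hy a ha) hya
      (hyode a ha).continuousAt).mono_left (nhdsWithin_mono _ fun _ h => ne_of_gt h))
    ((tendsto_piconeFun_nhdsNE (hx b hb) hxb (hxode b hb).continuousAt (hy b hb) hyb
      (hyode b hb).continuousAt).mono_left (nhdsWithin_mono _ fun _ h => ne_of_lt h))
  have hG₀ : G t = 0 := (hF t ht).unique ((hasDerivAt_const t 0).congr_of_eventuallyEq
    (mem_of_superset (isOpen_Ioo.mem_nhds ht) hF₀))
  obtain ⟨h₁, h₂, h₃⟩ := hterms t ht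
  have hW : p₁ t * (x' t * y t - x t * y' t) ^ 2 / y t ^ 2 = 0 := by
    simp only [G] at hG₀
    linarith
  simpa [(hp₁_pos t ht).ne', hy₀ t ht] using hW

end Picone

theorem stmt2_general (I : Set ℝ) (hI : I.OrdConnected)
    (p p₁ q q₁ x x' y y' : ℝ → ℝ)
    (hp₁_cont : ContinuousOn p₁ I) (hq₁_cont : ContinuousOn q₁ I)
    (hpp₁ : ∀ t ∈ I, p₁ t ≤ p t) (hp₁_pos : ∀ t ∈ I, 0 < p₁ t)
    (hqq₁ : ∀ t ∈ I, q t ≤ q₁ t)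
    (hx : ∀ t ∈ I, HasDerivAt x (x' t) t)
    (hxode : ∀ t ∈ I, HasDerivAt (fun s => p s * x' s) (-(q t * x t)) t)
    (hy : ∀ t ∈ I, HasDerivAt y (y' t) t)
    (hyode : ∀ t ∈ I, HasDerivAt (fun s => p₁ s * y' s) (-(q₁ t * y t)) t)
    (t₁ t₂ : ℝ) (ht₁ : t₁ ∈ I) (ht₂ : t₂ ∈ I) (h12 : t₁ < t₂)
    (hxt₁ : x t₁ = 0) (hxt₂ : x t₂ = 0)
    (hconsec : ∀ t ∈ Ioo t₁ t₂, x t ≠ 0) :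
    (∃ t ∈ Ioo t₁ t₂, y t = 0) ∨ ∃ d : ℝ, ∀ t ∈ Ioo t₁ t₂, y t = d * x t := by
  refine or_iff_not_imp_left.2 fun hzero => ?_
  push Not at hzero
  have hIcc : Icc t₁ t₂ ⊆ I := hI.out ht₁ ht₂
  have hIoo : Ioo t₁ t₂ ⊆ I := Ioo_subset_Icc_self.trans hIcc
  have hy_simple : ∀ t ∈ Icc t₁ t₂, y t ≠ 0 ∨ y' t ≠ 0 := by
    intro t ht
    by_contra! hyt
    obtain ⟨m, hm⟩ := exists_between h12
    exact hzero m hm <| eqOn_zero_of_sturmLiouville (hp₁_cont.mono hIcc)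
      (fun s hs => hp₁_pos s (hIcc hs)) (hq₁_cont.mono hIcc) (fun s hs => hy s (hIcc hs))
      (fun s hs => hyode s (hIcc hs)) ht hyt.1 hyt.2 (Ioo_subset_Icc_self hm)
  exact exists_eq_const_mul_of_wronskian_eq_zero isOpen_Ioo isPreconnected_Ioo
    (fun t ht => hx t (hIoo ht)) (fun t ht => hy t (hIoo ht)) hconsec <|
    wronskian_eq_zero_of_picone (fun t ht => hpp₁ t (hIoo ht)) (fun t ht => hp₁_pos t (hIoo ht))
      (fun t ht => hqq₁ t (hIoo ht)) (fun t ht => hx t (hIcc ht)) (fun t ht => hxode t (hIcc ht))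
      (fun t ht => hy t (hIcc ht)) (fun t ht => hyode t (hIcc ht)) hxt₁ hxt₂
      (hy_simple t₁ (left_mem_Icc.2 h12.le)) (hy_simple t₂ (right_mem_Icc.2 h12.le)) hzero

/-- Sturm–Picone comparison theorem. -/
theorem stmt2 (I : Set ℝ) (hI : I.OrdConnected)
    (p p₁ q q₁ x x' y y' : ℝ → ℝ)
    (hp_cont : ContinuousOn p I) (hp₁_cont : ContinuousOn p₁ I)
    (hq_cont : ContinuousOn q I) (hq₁_cont : ContinuousOn q₁ I)
    (hpp₁ : ∀ t ∈ I, p₁ t ≤ p t) (hp₁_pos : ∀ t ∈ I, 0 < p₁ t)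
    (hqq₁ : ∀ t ∈ I, q t ≤ q₁ t)
    (hx : ∀ t ∈ I, HasDerivAt x (x' t) t)
    (hxode : ∀ t ∈ I, HasDerivAt (fun s => p s * x' s) (-(q t * x t)) t)
    (hy : ∀ t ∈ I, HasDerivAt y (y' t) t)
    (hyode : ∀ t ∈ I, HasDerivAt (fun s => p₁ s * y' s) (-(q₁ t * y t)) t)
    (hx_nontriv : ∃ t ∈ I, x t ≠ 0)
    (hy_nontriv : ∃ t ∈ I, y t ≠ 0)
    (t₁ t₂ : ℝ) (ht₁ : t₁ ∈ I) (ht₂ : t₂ ∈ I) (h12 : t₁ < t₂)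
    (hxt₁ : x t₁ = 0) (hxt₂ : x t₂ = 0)
    (hconsec : ∀ t ∈ Ioo t₁ t₂, x t ≠ 0) :
    (∃ t ∈ Ioo t₁ t₂, y t = 0) ∨ ∃ d : ℝ, ∀ t ∈ Ioo t₁ t₂, y t = d * x t :=
  stmt2_general I hI p p₁ q q₁ x x' y y' hp₁_cont hq₁_cont hpp₁ hp₁_pos hqq₁ hx hxode hy hyode t₁ t₂
    ht₁ ht₂ h12 hxt₁ hxt₂ hconsec
end

section
/- Let r : [t₀, ∞) → ℝ be continuous, increasing, with 0 < r(t) < R, let n ≥ 2, λ > 0, and let u solve (r^{n-1} u')' + λ r^{n-1} u = 0 with consecutive zeros t_k < t_{k+1} and u'(t_k) ≠ 0. Define v_k(t) = (r(t_k)^{n-1} u'(t_k))/(R^{n-1}√λ) · sin(√λ · R^{n-1} ∫_{t_k}^t ds/r(s)^{n-1}). Then |v_k(t)| ≤ |u(t)| for all t in (t_k, t̃_k), where t̃_k is the first zero of v_k after t_k. -/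
open Set Real intervalIntegral Filter Topology

/-!
The comparison function is `v = C sin θ` with `θ' = ω / p`, where `p = r^(n-1)` and
`ω = √λ R^(n-1)`; it solves `(p v')' + (ω² / p) v = 0`, whose coefficient dominates `λ p` because
`r < R`, and it leaves `t_k` with the same slope `u'(t_k)` as `u`. The Wronskian
`W = p (u' v - u v')` vanishes at `t_k` and has derivative `(ω² / p - λ p) u v ≥ 0` while `u v > 0`,
so `(u / v)' = W / (p v²) ≥ 0`: the ratio `u / v` increases from its limit `1` at `t_k`, which gives
`|v| ≤ |u|` up to the first zero of either function. As `u(t_{k+1}) = 0`, `v` vanishes first.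
-/

theorem tendsto_div_nhdsGT_of_hasDerivWithinAt {f g : ℝ → ℝ} {f' g' a : ℝ}
    (hf : HasDerivWithinAt f f' (Ici a) a) (hg : HasDerivWithinAt g g' (Ici a) a)
    (hfa : f a = 0) (hga : g a = 0) (hg' : g' ≠ 0) :
    Tendsto (fun x => f x / g x) (𝓝[>] a) (𝓝 (f' / g')) := by
  have hslope {h : ℝ → ℝ} {h' : ℝ} (hh : HasDerivWithinAt h h' (Ici a) a) :
      Tendsto (slope h a) (𝓝[>] a) (𝓝 h') := by
    rw [← Ici_sdiff_left]; exact hasDerivWithinAt_iff_tendsto_slope.mp hh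
  refine ((hslope hf).div (hslope hg) hg').congr' ?_
  filter_upwards [self_mem_nhdsWithin] with x hx
  rw [Pi.div_apply, slope_def_field, slope_def_field, hfa, hga, sub_zero, sub_zero,
    div_div_div_cancel_right₀ (sub_pos.mpr hx).ne']

theorem pos_of_tendsto_nhdsGT_of_ne_zero {f : ℝ → ℝ} {a b c : ℝ}
    (hf : ContinuousOn f (Ioo a b)) (hf0 : ∀ x ∈ Ioo a b, f x ≠ 0)
    (hlim : Tendsto f (𝓝[>] a) (𝓝 c)) (hc : 0 < c) : ∀ x ∈ Ioo a b, 0 < f x := by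
  intro x hx
  by_contra! hneg
  obtain ⟨y, hfy, hy⟩ := ((hlim.eventually (eventually_gt_nhds hc)).and
    (Ioo_mem_nhdsGT hx.1)).exists
  obtain ⟨z, hz, hfz⟩ := isPreconnected_Ioo.intermediate_value hx ⟨hy.1, hy.2.trans hx.2⟩ hf
    ⟨hneg, hfy.le⟩
  exact hf0 z hz hfz

theorem MonotoneOn.le_of_tendsto_nhdsGT {f : ℝ → ℝ} {a b c : ℝ} (hf : MonotoneOn f (Ioo a b))
    (hlim : Tendsto f (𝓝[>] a) (𝓝 c)) : ∀ x ∈ Ioo a b, c ≤ f x := fun x hx =>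
  le_of_tendsto hlim <| by
    filter_upwards [Ioo_mem_nhdsGT hx.1] with y hy using hf ⟨hy.1, hy.2.trans hx.2⟩ hx hy.2.le

theorem hasDerivAt_wronskian {u v U V : ℝ → ℝ} {u' v' p q₁ q₂ x : ℝ}
    (hu : HasDerivAt u u' x) (hv : HasDerivAt v v' x)
    (hU : HasDerivAt U (-(q₁ * u x)) x) (hV : HasDerivAt V (-(q₂ * v x)) x)
    (hUp : U x = p * u') (hVp : V x = p * v') :
    HasDerivAt (fun s => U s * v s - u s * V s) ((q₂ - q₁) * (u x * v x)) x := by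
  refine ((hU.mul hv).sub (hu.mul hV)).congr_deriv ?_
  rw [hUp, hVp]
  ring

theorem wronskian_nonneg_of_sturm_comparison {a b : ℝ} {p q₁ q₂ u u' v v' U V : ℝ → ℝ}
    (hu : ∀ x ∈ Ico a b, HasDerivWithinAt u (u' x) (Ici a) x)
    (hv : ∀ x ∈ Ico a b, HasDerivWithinAt v (v' x) (Ici a) x)
    (hU : ∀ x ∈ Ico a b, HasDerivWithinAt U (-(q₁ x * u x)) (Ici a) x)
    (hV : ∀ x ∈ Ico a b, HasDerivWithinAt V (-(q₂ x * v x)) (Ici a) x)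
    (hUp : ∀ x ∈ Ioo a b, U x = p x * u' x) (hVp : ∀ x ∈ Ioo a b, V x = p x * v' x)
    (hq : ∀ x ∈ Ioo a b, q₁ x ≤ q₂ x) (huv : ∀ x ∈ Ioo a b, 0 ≤ u x * v x)
    (hua : u a = 0) (hva : v a = 0) :
    ∀ x ∈ Ico a b, 0 ≤ U x * v x - u x * V x := by
  have hIoo {f f' : ℝ → ℝ} (hf : ∀ x ∈ Ico a b, HasDerivWithinAt f (f' x) (Ici a) x) :
      ∀ x ∈ Ioo a b, HasDerivAt f (f' x) x := fun x hx =>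
    (hf x (Ioo_subset_Ico_self hx)).hasDerivAt (Ici_mem_nhds hx.1)
  have hmono : MonotoneOn (fun x => U x * v x - u x * V x) (Ico a b) := by
    refine monotoneOn_of_hasDerivWithinAt_nonneg (convex_Ico a b)
      (f' := fun x => (q₂ x - q₁ x) * (u x * v x)) (fun x hx => ?_) (fun x hx => ?_)
      (fun x hx => ?_)
    · exact (((hU x hx).mul (hv x hx)).sub ((hu x hx).mul (hV x hx))).continuousWithinAt.mono
        fun y hy => hy.1
    · rw [interior_Ico] at hx ⊢
      exact (hasDerivAt_wronskian (hIoo hu x hx) (hIoo hv x hx) (hIoo hU x hx) (hIoo hV x hx)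
        (hUp x hx) (hVp x hx)).hasDerivWithinAt
    · rw [interior_Ico] at hx
      exact mul_nonneg (sub_nonneg.2 (hq x hx)) (huv x hx)
  intro x hx
  simpa [hua, hva] using hmono ⟨le_rfl, hx.1.trans_lt hx.2⟩ hx hx.1

/-- `U = p u'` and `V = p v'` are the fluxes of `u` and `v`: only they, not `p`, need to be
differentiable. -/
theorem abs_le_abs_of_sturm_comparison {a b : ℝ} {p q₁ q₂ u u' v v' U V : ℝ → ℝ} (hab : a < b)
    (hu : ∀ x ∈ Ico a b, HasDerivWithinAt u (u' x) (Ici a) x)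
    (hv : ∀ x ∈ Ico a b, HasDerivWithinAt v (v' x) (Ici a) x)
    (hU : ∀ x ∈ Ico a b, HasDerivWithinAt U (-(q₁ x * u x)) (Ici a) x)
    (hV : ∀ x ∈ Ico a b, HasDerivWithinAt V (-(q₂ x * v x)) (Ici a) x)
    (hUp : ∀ x ∈ Ioo a b, U x = p x * u' x) (hVp : ∀ x ∈ Ioo a b, V x = p x * v' x)
    (hp : ∀ x ∈ Ioo a b, 0 < p x) (hq : ∀ x ∈ Ioo a b, q₁ x ≤ q₂ x)
    (hua : u a = 0) (hva : v a = 0) (hv'a : v' a = u' a) (hu'a : u' a ≠ 0)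
    (hu0 : ∀ x ∈ Ioo a b, u x ≠ 0) (hv0 : ∀ x ∈ Ioo a b, v x ≠ 0) :
    ∀ x ∈ Ioo a b, |v x| ≤ |u x| := by
  have hratio : ∀ x ∈ Ioo a b, HasDerivAt (fun x => u x / v x)
      ((u' x * v x - u x * v' x) / v x ^ 2) x := fun x hx =>
    ((hu x (Ioo_subset_Ico_self hx)).hasDerivAt (Ici_mem_nhds hx.1)).div
      ((hv x (Ioo_subset_Ico_self hx)).hasDerivAt (Ici_mem_nhds hx.1)) (hv0 x hx)
  have hlim : Tendsto (fun x => u x / v x) (𝓝[>] a) (𝓝 1) := by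
    simpa only [hv'a, div_self hu'a] using tendsto_div_nhdsGT_of_hasDerivWithinAt
      (hu a ⟨le_rfl, hab⟩) (hv a ⟨le_rfl, hab⟩) hua hva (hv'a ▸ hu'a)
  have hratio_pos : ∀ x ∈ Ioo a b, 0 < u x / v x :=
    pos_of_tendsto_nhdsGT_of_ne_zero (fun x hx => (hratio x hx).continuousAt.continuousWithinAt)
      (fun x hx => div_ne_zero (hu0 x hx) (hv0 x hx)) hlim one_pos
  have hW := wronskian_nonneg_of_sturm_comparison hu hv hU hV hUp hVp hq
    (fun x hx => (mul_pos_iff.2 (div_pos_iff.1 (hratio_pos x hx))).le) hua hva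
  have hratio_mono : MonotoneOn (fun x => u x / v x) (Ioo a b) := by
    refine monotoneOn_of_hasDerivWithinAt_nonneg (convex_Ioo a b)
      (f' := fun x => (u' x * v x - u x * v' x) / v x ^ 2) (fun x hx => ?_) (fun x hx => ?_)
      (fun x hx => ?_)
    · exact (hratio x hx).continuousAt.continuousWithinAt
    · rw [interior_Ioo] at hx ⊢
      exact (hratio x hx).hasDerivWithinAt
    · rw [interior_Ioo] at hx
      have hWx := hW x (Ioo_subset_Ico_self hx)
      rw [hUp x hx, hVp x hx] at hWx
      have : 0 ≤ u' x * v x - u x * v' x := by nlinarith [hp x hx]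
      positivity
  intro x hx
  have h1 := hratio_mono.le_of_tendsto_nhdsGT hlim x hx
  rwa [← abs_of_pos (hratio_pos x hx), abs_div, one_le_div (abs_pos.2 (hv0 x hx))] at h1

theorem le_of_abs_le_abs_of_apply_eq_zero {u v : ℝ → ℝ} {a b c : ℝ} (hab : a < b)
    (hu : ContinuousAt u b) (hv : ContinuousAt v b) (hub : u b = 0)
    (hv0 : ∀ x ∈ Ioo a c, v x ≠ 0) (hle : ∀ x ∈ Ioo a (min c b), |v x| ≤ |u x|) : c ≤ b := by
  by_contra! hbc
  have hvb : |v b| ≤ |u b| := by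
    refine le_of_tendsto_of_tendsto (hv.abs.tendsto.mono_left (nhdsWithin_le_nhds (s := Iio b)))
      (hu.abs.tendsto.mono_left nhdsWithin_le_nhds) ?_
    filter_upwards [Ioo_mem_nhdsLT hab] with x hx
    exact hle x ⟨hx.1, lt_min (hx.2.trans hbc) hx.2⟩
  rw [hub, abs_zero, abs_nonpos_iff] at hvb
  exact hv0 b ⟨hab, hbc⟩ hvb

theorem hasDerivWithinAt_integral_Ici {f : ℝ → ℝ} {a x : ℝ} (hf : ContinuousOn f (Ici a))
    (hx : x ∈ Ici a) : HasDerivWithinAt (fun t => ∫ s in a..t, f s) (f x) (Ici a) x := by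
  have hint :=
    (hf.mono Icc_subset_Ici_self).intervalIntegrable_of_Icc (μ := MeasureTheory.volume) hx
  rcases (mem_Ici.mp hx).eq_or_lt with rfl | hax
  · exact integral_hasDerivWithinAt_right hint
      ((hf.mono Ioi_subset_Ici_self).stronglyMeasurableAtFilter_nhdsWithin measurableSet_Ioi a)
      ((hf a hx).mono Ioi_subset_Ici_self)
  · exact (integral_hasDerivAt_right hint
      ((hf.mono Ioi_subset_Ici_self).stronglyMeasurableAtFilter isOpen_Ioi x hax)
      (hf.continuousAt (Ici_mem_nhds hax))).hasDerivWithinAt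

theorem hasDerivWithinAt_const_mul_integral_one_div {p : ℝ → ℝ} {a ω x : ℝ}
    (hp : ContinuousOn p (Ici a)) (hp0 : ∀ y ∈ Ici a, p y ≠ 0) (hx : x ∈ Ici a) :
    HasDerivWithinAt (fun t => ω * ∫ s in a..t, 1 / p s) (ω / p x) (Ici a) x :=
  ((hasDerivWithinAt_integral_Ici (continuousOn_const.div hp hp0) hx).const_mul ω).congr_deriv
    (mul_one_div ω _)

section SineSolution

variable {θ : ℝ → ℝ} {C ω p x : ℝ} {s : Set ℝ}

theorem hasDerivWithinAt_const_mul_sin (hθ : HasDerivWithinAt θ (ω / p) s x) :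
    HasDerivWithinAt (fun t => C * sin (θ t)) (C * ω * cos (θ x) / p) s x :=
  (hθ.sin.const_mul C).congr_deriv (by ring)

theorem hasDerivWithinAt_const_mul_cos (hθ : HasDerivWithinAt θ (ω / p) s x) :
    HasDerivWithinAt (fun t => C * ω * cos (θ t)) (-(ω ^ 2 / p * (C * sin (θ x)))) s x :=
  (hθ.cos.const_mul (C * ω)).congr_deriv (by ring)

end SineSolution

theorem stmt5_general (t₀ R lam : ℝ) (n : ℕ) (hR : 0 < R) (hlam : 0 < lam)
    (r u u' : ℝ → ℝ)
    (hr_cont : ContinuousOn r (Ici t₀))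
    (hr : ∀ t ∈ Ici t₀, 0 < r t ∧ r t < R)
    (hu : ∀ t ∈ Ici t₀, HasDerivAt u (u' t) t)
    (hode : ∀ t ∈ Ici t₀,
      HasDerivAt (fun s => r s ^ (n - 1) * u' s) (-(lam * r t ^ (n - 1) * u t)) t)
    (tk tk1 : ℝ) (htk : t₀ ≤ tk) (hkk1 : tk < tk1)
    (hutk : u tk = 0) (hutk1 : u tk1 = 0)
    (hconsec : ∀ t ∈ Ioo tk tk1, u t ≠ 0)
    (hu'tk : u' tk ≠ 0)
    (vk : ℝ → ℝ)
    (hvk : ∀ t, vk t = r tk ^ (n - 1) * u' tk / (R ^ (n - 1) * Real.sqrt lam) *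
      Real.sin (Real.sqrt lam * R ^ (n - 1) * ∫ s in tk..t, 1 / r s ^ (n - 1)))
    (ttk : ℝ) (httk : tk < ttk)
    (hfirst : ∀ s ∈ Ioo tk ttk, vk s ≠ 0) :
    ∀ t ∈ Ioo tk ttk, |vk t| ≤ |u t| := by
  set ω := Real.sqrt lam * R ^ (n - 1)
  set θ := fun t => ω * ∫ s in tk..t, 1 / r s ^ (n - 1)
  set C := r tk ^ (n - 1) * u' tk / (R ^ (n - 1) * Real.sqrt lam)
  obtain rfl : vk = fun t => C * sin (θ t) := funext hvk
  have hIci : Ici tk ⊆ Ici t₀ := Ici_subset_Ici.2 htk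
  have hp : ∀ x ∈ Ici tk, 0 < r x ^ (n - 1) := fun x hx => pow_pos (hr x (hIci hx)).1 _
  have hθ : ∀ x ∈ Ici tk, HasDerivWithinAt θ (ω / r x ^ (n - 1)) (Ici tk) x := fun x hx =>
    hasDerivWithinAt_const_mul_integral_one_div ((hr_cont.mono hIci).pow _)
      (fun y hy => (hp y hy).ne') hx
  have hq : ∀ x ∈ Ici tk, lam * r x ^ (n - 1) ≤ ω ^ 2 / r x ^ (n - 1) := fun x hx => by
    have hrR := pow_le_pow_left₀ (hr x (hIci hx)).1.le (hr x (hIci hx)).2.le (n - 1)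
    rw [le_div_iff₀ (hp x hx), mul_pow, sq_sqrt hlam.le, mul_assoc, ← sq]
    exact mul_le_mul_of_nonneg_left (pow_le_pow_left₀ (hp x hx).le hrR 2) hlam.le
  have hv'tk : C * ω * cos (θ tk) / r tk ^ (n - 1) = u' tk := by
    simp only [θ, integral_same, mul_zero, cos_zero, mul_one, C, ω]
    field_simp [(hp tk self_mem_Ici).ne', (pow_pos hR (n - 1)).ne', (Real.sqrt_pos.2 hlam).ne']
  have hcomp := abs_le_abs_of_sturm_comparison (p := fun t => r t ^ (n - 1))
    (q₁ := fun t => lam * r t ^ (n - 1)) (U := fun s => r s ^ (n - 1) * u' s)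
    (lt_min httk hkk1) (fun x hx => (hu x (hIci hx.1)).hasDerivWithinAt)
    (fun x hx => hasDerivWithinAt_const_mul_sin (hθ x hx.1))
    (fun x hx => (hode x (hIci hx.1)).hasDerivWithinAt)
    (fun x hx => hasDerivWithinAt_const_mul_cos (hθ x hx.1)) (fun x hx => rfl)
    (fun x hx => (mul_div_cancel₀ _ (hp x hx.1.le).ne').symm)
    (fun x hx => hp x hx.1.le) (fun x hx => hq x hx.1.le)
    hutk (by simp [θ]) hv'tk hu'tk
    (fun x hx => hconsec x ⟨hx.1, hx.2.trans_le (min_le_right _ _)⟩)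
    (fun x hx => hfirst x ⟨hx.1, hx.2.trans_le (min_le_left _ _)⟩)
  have httk1 : ttk ≤ tk1 :=
    le_of_abs_le_abs_of_apply_eq_zero hkk1 (hu tk1 (hIci hkk1.le)).continuousAt
    ((hasDerivWithinAt_const_mul_sin (hθ tk1 hkk1.le)).hasDerivAt (Ici_mem_nhds hkk1)).continuousAt
    hutk1 hfirst hcomp
  rwa [min_eq_left httk1] at hcomp

/-- Lower comparison: `|v_k| ≤ |u|` on `(t_k, t̃_k)`, where `t̃_k` is the first zero
of the comparison function `v_k` after `t_k`. -/
theorem stmt5 (t₀ R lam : ℝ) (n : ℕ) (hn : 2 ≤ n) (hR : 0 < R) (hlam : 0 < lam)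
    (r u u' : ℝ → ℝ)
    (hr_cont : ContinuousOn r (Ici t₀))
    (hr_mono : StrictMonoOn r (Ici t₀))
    (hr : ∀ t ∈ Ici t₀, 0 < r t ∧ r t < R)
    (hu : ∀ t ∈ Ici t₀, HasDerivAt u (u' t) t)
    (hode : ∀ t ∈ Ici t₀,
      HasDerivAt (fun s => r s ^ (n - 1) * u' s) (-(lam * r t ^ (n - 1) * u t)) t)
    (tk tk1 : ℝ) (htk : t₀ ≤ tk) (hkk1 : tk < tk1)
    (hutk : u tk = 0) (hutk1 : u tk1 = 0)
    (hconsec : ∀ t ∈ Ioo tk tk1, u t ≠ 0)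
    (hu'tk : u' tk ≠ 0)
    (vk : ℝ → ℝ)
    (hvk : ∀ t, vk t = r tk ^ (n - 1) * u' tk / (R ^ (n - 1) * Real.sqrt lam) *
      Real.sin (Real.sqrt lam * R ^ (n - 1) * ∫ s in tk..t, 1 / r s ^ (n - 1)))
    (ttk : ℝ) (httk : tk < ttk) (hvttk : vk ttk = 0)
    (hfirst : ∀ s ∈ Ioo tk ttk, vk s ≠ 0) :
    ∀ t ∈ Ioo tk ttk, |vk t| ≤ |u t| :=
  stmt5_general t₀ R lam n hR hlam r u u' hr_cont hr hu hode tk tk1 htk hkk1 hutk hutk1 hconsec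
    hu'tk vk hvk ttk httk hfirst
end

section
/- Let r be continuous, increasing, positive on [t₀, ∞), n ≥ 2, λ > 0, and let u solve (r^{n-1} u')' + λ r^{n-1} u = 0 with u(t₀) = 0 and zeros t₀ < t₁ < ⋯ < t_k. Then r(t_k)^{2(n-1)} u'(t_k)² − r(t₀)^{2(n-1)} u'(t₀)² = 2λ(n−1) ∫_{t₀}^{t_k} r(s)^{2(n-1)-1} r'(s) u(s)² ds. -/
/-!
With `m = n - 1`, the equation says `(r^m u')' = -λ r^m u`, so the energy
`E = (r^m u')² + λ (r^m u)²` has derivative `2λ (r^m u)(r^m)' u = 2λ m r^(2m-1) r' u²`: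
the term `2 (r^m u')(-λ r^m u)` cancels against the `u'` part of `((r^m u)²)'`.
Integrating from `t₀` to `t_k`, where `u` vanishes, leaves only the `u'` terms of `E`.
-/

open Set Real intervalIntegral

def radialEnergy (m : ℕ) (lam : ℝ) (r u u' : ℝ → ℝ) (s : ℝ) : ℝ :=
  (r s ^ m * u' s) ^ 2 + lam * (r s ^ m * u s) ^ 2

section RadialEnergy

variable {m : ℕ} {lam : ℝ} {r r' u u' : ℝ → ℝ}

theorem radialEnergy_of_eq_zero {s : ℝ} (hs : u s = 0) :
    radialEnergy m lam r u u' s = r s ^ (2 * m) * u' s ^ 2 := by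
  simp [radialEnergy, hs, mul_pow, pow_mul']

theorem hasDerivAt_radialEnergy (hm : 1 ≤ m) {t : ℝ} (hr : HasDerivAt r (r' t) t)
    (hu : HasDerivAt u (u' t) t)
    (hode : HasDerivAt (fun s => r s ^ m * u' s) (-(lam * r t ^ m * u t)) t) :
    HasDerivAt (radialEnergy m lam r u u')
      (2 * lam * m * (r t ^ (2 * m - 1) * r' t * u t ^ 2)) t := by
  have hrm_u : HasDerivAt (fun s => r s ^ m * u s)
      (m * r t ^ (m - 1) * r' t * u t + r t ^ m * u' t) t := (hr.pow m).mul hu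
  have hpow : r t ^ (2 * m - 1) = r t ^ (m - 1) * r t ^ m := by
    rw [← pow_add]; congr 1; omega
  refine ((hode.pow 2).add ((hrm_u.pow 2).const_mul lam)).congr_deriv ?_
  rw [hpow]
  ring

theorem radialEnergy_sub_eq_integral (hm : 1 ≤ m) {a b : ℝ} (hab : a ≤ b)
    (hr : ∀ t ∈ Icc a b, HasDerivAt r (r' t) t) (hr' : ContinuousOn r' (Icc a b))
    (hu : ∀ t ∈ Icc a b, HasDerivAt u (u' t) t)
    (hode : ∀ t ∈ Icc a b,
      HasDerivAt (fun s => r s ^ m * u' s) (-(lam * r t ^ m * u t)) t) :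
    radialEnergy m lam r u u' b - radialEnergy m lam r u u' a =
      2 * lam * m * ∫ s in a..b, r s ^ (2 * m - 1) * r' s * u s ^ 2 := by
  have hrc : ContinuousOn r (Icc a b) := fun t ht => (hr t ht).continuousAt.continuousWithinAt
  have huc : ContinuousOn u (Icc a b) := fun t ht => (hu t ht).continuousAt.continuousWithinAt
  have hint : IntervalIntegrable (fun s => r s ^ (2 * m - 1) * r' s * u s ^ 2)
      MeasureTheory.volume a b :=
    (((hrc.pow _).mul hr').mul (huc.pow 2)).intervalIntegrable_of_Icc hab
  rw [← integral_const_mul]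
  refine (integral_eq_sub_of_hasDerivAt (fun t ht => ?_) (hint.const_mul _)).symm
  rw [uIcc_of_le hab] at ht
  exact hasDerivAt_radialEnergy hm (hr t ht) (hu t ht) (hode t ht)

end RadialEnergy

theorem stmt7_general (t₀ lam : ℝ) (n : ℕ) (hn : 2 ≤ n)
    (r r' u u' : ℝ → ℝ)
    (hr : ∀ t ∈ Ici t₀, HasDerivAt r (r' t) t)
    (hr'_cont : ContinuousOn r' (Ici t₀))
    (hu : ∀ t ∈ Ici t₀, HasDerivAt u (u' t) t)
    (hode : ∀ t ∈ Ici t₀,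
      HasDerivAt (fun s => r s ^ (n - 1) * u' s) (-(lam * r t ^ (n - 1) * u t)) t)
    (tseq : ℕ → ℝ) (htseq0 : tseq 0 = t₀)
    (htseq_mem : ∀ k, tseq k ∈ Ici t₀)
    (htseq_zero : ∀ k, u (tseq k) = 0)
    (k : ℕ) :
    r (tseq k) ^ (2 * (n - 1)) * u' (tseq k) ^ 2 - r t₀ ^ (2 * (n - 1)) * u' t₀ ^ 2 =
      2 * lam * ((n : ℝ) - 1) *
        ∫ s in t₀..tseq k, r s ^ (2 * (n - 1) - 1) * r' s * u s ^ 2 := by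
  have hIcc : Icc t₀ (tseq k) ⊆ Ici t₀ := Icc_subset_Ici_self
  have hu₀ : u t₀ = 0 := htseq0 ▸ htseq_zero 0
  have hcast : ((n - 1 : ℕ) : ℝ) = (n : ℝ) - 1 := by
    rw [Nat.cast_sub (by omega), Nat.cast_one]
  rw [← radialEnergy_of_eq_zero (lam := lam) (htseq_zero k),
    ← radialEnergy_of_eq_zero (lam := lam) hu₀, ← hcast]
  exact radialEnergy_sub_eq_integral (by omega) (htseq_mem k)
    (fun t ht => hr t (hIcc ht)) (hr'_cont.mono hIcc) (fun t ht => hu t (hIcc ht))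
    (fun t ht => hode t (hIcc ht))

/-- Energy identity: `r(t_k)^{2(n-1)} u'(t_k)² − r(t₀)^{2(n-1)} u'(t₀)²
  = 2λ(n−1) ∫_{t₀}^{t_k} r^{2(n-1)-1} r' u² ds`. -/
theorem stmt7 (t₀ lam : ℝ) (n : ℕ) (hn : 2 ≤ n) (hlam : 0 < lam)
    (r r' u u' : ℝ → ℝ)
    (hr : ∀ t ∈ Ici t₀, HasDerivAt r (r' t) t)
    (hr'_cont : ContinuousOn r' (Ici t₀))
    (hr_mono : StrictMonoOn r (Ici t₀))
    (hr_pos : ∀ t ∈ Ici t₀, 0 < r t)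
    (hu : ∀ t ∈ Ici t₀, HasDerivAt u (u' t) t)
    (hode : ∀ t ∈ Ici t₀,
      HasDerivAt (fun s => r s ^ (n - 1) * u' s) (-(lam * r t ^ (n - 1) * u t)) t)
    (tseq : ℕ → ℝ) (htseq0 : tseq 0 = t₀) (htseq_mono : StrictMono tseq)
    (htseq_mem : ∀ k, tseq k ∈ Ici t₀)
    (htseq_zero : ∀ k, u (tseq k) = 0)
    (k : ℕ) :
    r (tseq k) ^ (2 * (n - 1)) * u' (tseq k) ^ 2 - r t₀ ^ (2 * (n - 1)) * u' t₀ ^ 2 =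
      2 * lam * ((n : ℝ) - 1) *
        ∫ s in t₀..tseq k, r s ^ (2 * (n - 1) - 1) * r' s * u s ^ 2 :=
  stmt7_general t₀ lam n hn r r' u u' hr hr'_cont hu hode tseq htseq0 htseq_mem htseq_zero k
end

section
/- Let r be C¹, increasing, with 0 < r(t) < R on [t₀, ∞), n ≥ 2, λ > 0, and let u solve (r^{n-1} u')' + λ r^{n-1} u = 0 with u(t₀) = 0, u'(t₀) > 0, and zeros t₀ < t₁ < t₂ < ⋯. Then for every k ≥ 1, u'(t_k)² ≤ R^{4(n-1)} / (r(t₀)^{2(n-1)} r(t₁)^{2(n-1)}) · u'(t₀)². -/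
/-!
Since `r` is increasing, the energy `E = u'² + λ u²` is nonincreasing along solutions:
the equation gives `u'' = -λ u - (n - 1) (r'/r) u'`, hence `E' = -2 (n - 1) (r'/r) u'² ≤ 0`.
At a zero `t_k` of `u` this gives `u'(t_k)² = E(t_k) ≤ E(t₀) = u'(t₀)²`, and the constant
`R^{4(n-1)} / (r(t₀)^{2(n-1)} r(t₁)^{2(n-1)})` is at least `1` because `r < R`.
-/

open Set Filter

lemma HasDerivAt.nonneg_of_monotoneOn_Ici {r : ℝ → ℝ} {r' t₀ t : ℝ} (ht : t₀ ≤ t)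
    (hr : HasDerivAt r r' t) (hr_mono : MonotoneOn r (Ici t₀)) : 0 ≤ r' := by
  have hacc : AccPt t (𝓟 (Ici t)) := by
    rw [accPt_principal_iff_nhdsWithin, Ici_sdiff_left]
    infer_instance
  exact hr.hasDerivWithinAt.nonneg_of_monotoneOn
    (hacc.mono (principal_mono.2 (Ici_subset_Ici.2 ht))) hr_mono

lemma ContinuousOn.of_continuousOn_pow_mul {r f : ℝ → ℝ} {s : Set ℝ} (p : ℕ)
    (hr : ContinuousOn r s) (hr0 : ∀ x ∈ s, r x ≠ 0)
    (hf : ContinuousOn (fun x => r x ^ p * f x) s) : ContinuousOn f s := by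
  have hrp x (hx : x ∈ s) : r x ^ p ≠ 0 := pow_ne_zero p (hr0 x hx)
  exact (hf.div (hr.pow p) hrp).congr fun x hx => (mul_div_cancel_left₀ _ (hrp x hx)).symm

lemma hasDerivAt_of_hasDerivAt_pow_mul {r u' : ℝ → ℝ} {r' w' t : ℝ} (p : ℕ)
    (hr : HasDerivAt r r' t) (hrt : r t ≠ 0)
    (hw : HasDerivAt (fun s => r s ^ p * u' s) w' t) :
    HasDerivAt u' (w' / r t ^ p - p * (r' / r t) * u' t) t := by
  have hquot := hw.div (hr.pow p) (pow_ne_zero p hrt)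
  have hev : (fun s => r s ^ p * u' s / r s ^ p) =ᶠ[nhds t] u' := by
    filter_upwards [hr.continuousAt.eventually_ne hrt] with s hs
    field_simp
  refine (hquot.congr_of_eventuallyEq hev.symm).congr_deriv ?_
  rcases p with _ | p
  · simp
  · simp only [Pi.pow_apply, add_tsub_cancel_right]
    field_simp
    push_cast
    ring

lemma hasDerivAt_energy {r u u' : ℝ → ℝ} {r' lam t : ℝ} (p : ℕ)
    (hr : HasDerivAt r r' t) (hrt : r t ≠ 0) (hu : HasDerivAt u (u' t) t)
    (hode : HasDerivAt (fun s => r s ^ p * u' s) (-(lam * r t ^ p * u t)) t) :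
    HasDerivAt (fun s => u' s ^ 2 + lam * u s ^ 2) (-(2 * p * (r' / r t) * u' t ^ 2)) t := by
  have hu' := hasDerivAt_of_hasDerivAt_pow_mul p hr hrt hode
  refine ((hu'.pow 2).add ((hu.pow 2).const_mul lam)).congr_deriv ?_
  field_simp
  ring

lemma antitoneOn_energy {r r' u u' : ℝ → ℝ} {t₀ lam : ℝ} (p : ℕ)
    (hr : ∀ t ∈ Ici t₀, HasDerivAt r (r' t) t) (hr_mono : MonotoneOn r (Ici t₀))
    (hr_pos : ∀ t ∈ Ici t₀, 0 < r t) (hu : ∀ t ∈ Ici t₀, HasDerivAt u (u' t) t)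
    (hode : ∀ t ∈ Ici t₀,
      HasDerivAt (fun s => r s ^ p * u' s) (-(lam * r t ^ p * u t)) t) :
    AntitoneOn (fun s => u' s ^ 2 + lam * u s ^ 2) (Ici t₀) := by
  have hu'_cont : ContinuousOn u' (Ici t₀) :=
    .of_continuousOn_pow_mul p (fun t ht => (hr t ht).continuousAt.continuousWithinAt)
      (fun t ht => (hr_pos t ht).ne') fun t ht => (hode t ht).continuousAt.continuousWithinAt
  have hu_cont : ContinuousOn u (Ici t₀) :=
    fun t ht => (hu t ht).continuousAt.continuousWithinAt
  refine antitoneOn_of_hasDerivWithinAt_nonpos (convex_Ici t₀)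
    (f' := fun t => -(2 * p * (r' t / r t) * u' t ^ 2))
    ((hu'_cont.pow 2).add (continuousOn_const.mul (hu_cont.pow 2))) (fun t ht => ?_) fun t ht => ?_
  all_goals replace ht : t ∈ Ici t₀ := Ioi_subset_Ici_self (by rwa [interior_Ici] at ht)
  · exact (hasDerivAt_energy p (hr t ht) (hr_pos t ht).ne' (hu t ht) (hode t ht)).hasDerivWithinAt
  · have hr' := (hr t ht).nonneg_of_monotoneOn_Ici ht hr_mono
    have hrt := hr_pos t ht
    exact neg_nonpos.2 (by positivity)

lemma one_le_pow_div_pow_mul_pow {a b R : ℝ} (m : ℕ) (ha : 0 < a) (hb : 0 < b)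
    (haR : a ≤ R) (hbR : b ≤ R) : 1 ≤ R ^ (4 * m) / (a ^ (2 * m) * b ^ (2 * m)) := by
  have : 0 < R := ha.trans_le haR
  rw [one_le_div (by positivity)]
  calc a ^ (2 * m) * b ^ (2 * m) ≤ R ^ (2 * m) * R ^ (2 * m) := by gcongr
    _ = R ^ (4 * m) := by rw [← pow_add]; ring_nf

theorem stmt9_general (t₀ R lam : ℝ) (n : ℕ)
    (r r' u u' : ℝ → ℝ)
    (hr : ∀ t ∈ Ici t₀, HasDerivAt r (r' t) t)
    (hr_mono : StrictMonoOn r (Ici t₀))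
    (hr_bd : ∀ t ∈ Ici t₀, 0 < r t ∧ r t < R)
    (hu : ∀ t ∈ Ici t₀, HasDerivAt u (u' t) t)
    (hode : ∀ t ∈ Ici t₀,
      HasDerivAt (fun s => r s ^ (n - 1) * u' s) (-(lam * r t ^ (n - 1) * u t)) t)
    (hu0 : u t₀ = 0)
    (tseq : ℕ → ℝ)
    (htseq_mem : ∀ k, tseq k ∈ Ici t₀)
    (htseq_zero : ∀ k, u (tseq k) = 0)
    (k : ℕ) :
    u' (tseq k) ^ 2 ≤
      R ^ (4 * (n - 1)) / (r t₀ ^ (2 * (n - 1)) * r (tseq 1) ^ (2 * (n - 1))) * u' t₀ ^ 2 := by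
  have henergy : u' (tseq k) ^ 2 ≤ u' t₀ ^ 2 := by
    simpa [htseq_zero k, hu0] using antitoneOn_energy (n - 1) hr hr_mono.monotoneOn
      (fun t ht => (hr_bd t ht).1) hu hode self_mem_Ici (htseq_mem k) (htseq_mem k)
  have h₀ := hr_bd t₀ self_mem_Ici
  have h₁ := hr_bd (tseq 1) (htseq_mem 1)
  exact henergy.trans <| le_mul_of_one_le_left (sq_nonneg _) <|
    one_le_pow_div_pow_mul_pow (n - 1) h₀.1 h₁.1 h₀.2.le h₁.2.le

/-- Upper bound on derivatives at zeros:
`u'(t_k)² ≤ R^{4(n-1)} / (r(t₀)^{2(n-1)} r(t₁)^{2(n-1)}) · u'(t₀)²` for `k ≥ 1`. -/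
theorem stmt9 (t₀ R lam : ℝ) (n : ℕ) (hn : 2 ≤ n) (hR : 0 < R) (hlam : 0 < lam)
    (r r' u u' : ℝ → ℝ)
    (hr : ∀ t ∈ Ici t₀, HasDerivAt r (r' t) t)
    (hr'_cont : ContinuousOn r' (Ici t₀))
    (hr_mono : StrictMonoOn r (Ici t₀))
    (hr_bd : ∀ t ∈ Ici t₀, 0 < r t ∧ r t < R)
    (hu : ∀ t ∈ Ici t₀, HasDerivAt u (u' t) t)
    (hode : ∀ t ∈ Ici t₀,
      HasDerivAt (fun s => r s ^ (n - 1) * u' s) (-(lam * r t ^ (n - 1) * u t)) t)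
    (hu0 : u t₀ = 0) (hu'0 : 0 < u' t₀)
    (tseq : ℕ → ℝ) (htseq0 : tseq 0 = t₀) (htseq_mono : StrictMono tseq)
    (htseq_mem : ∀ k, tseq k ∈ Ici t₀)
    (htseq_zero : ∀ k, u (tseq k) = 0)
    (htseq_all : ∀ s ∈ Ici t₀, u s = 0 → ∃ k, s = tseq k)
    (k : ℕ) (hk : 1 ≤ k) :
    u' (tseq k) ^ 2 ≤
      R ^ (4 * (n - 1)) / (r t₀ ^ (2 * (n - 1)) * r (tseq 1) ^ (2 * (n - 1))) * u' t₀ ^ 2 :=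
  stmt9_general t₀ R lam n r r' u u' hr hr_mono hr_bd hu hode hu0 tseq htseq_mem htseq_zero k
end

section
/- Let r be C¹, increasing, with 0 < r(t) < R on [t₀, ∞), n ≥ 2, λ > 0, and let u solve (r^{n-1} u')' + λ r^{n-1} u = 0 with u(t₀) = 0 and zeros t₀ < t₁ < ⋯. Then there is a constant c > 0 (depending only on λ, R, n, r(t₀), r(t₁)) such that for all p ∈ ℕ: ∫_{t₀}^{t_{3p}} u² r^{n-1} dt ≤ c · ∫_{t_p}^{t_{2p}} u² r^{n-1} dt. -/
/-!
With `w = r^(n-1)` the equation reads `(w u')' = -λ w u`. Along a solution the energy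
`F = u'² + λ u²` is nonincreasing (`F' = -2 (w'/w) u'²`) while `w² F` is nondecreasing (its
derivative is `2 λ w w' u²`), so `F` stays between `(w(t₀)/R)² F(t₀)` and `F(t₀) > 0`.
On a nodal interval `[t_k, t_{k+1}]` the solution has one sign, so
`∫ u² w ≤ sup |u| · |∫ u w| = sup |u| · |(w u')(t_k) - (w u')(t_{k+1})| / λ` is bounded above.
At the critical point of `u` in that interval `λ u² = F` is bounded below, and since `|u'|` is
bounded, `|u|` stays large on an interval of fixed length; so `∫ u² w` is also bounded below by a
positive constant. The integral over `[t₀, t_{3p}]` covers `3p` nodal intervals and the one over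
`[t_p, t_{2p}]` covers `p` of them.
-/

open Set Real intervalIntegral

lemma HasDerivAt.nonneg_of_monotoneOn_Ici_s10 {g : ℝ → ℝ} {g' a x : ℝ} (hd : HasDerivAt g g' x)
    (hg : MonotoneOn g (Ici a)) (hx : a < x) : 0 ≤ g' :=
  hd.hasDerivWithinAt.nonneg_of_monotoneOn
    (((PerfectSpace.univ_preperfect x (mem_univ x)).nhds_inter (Ici_mem_nhds hx)).mono
      (Filter.principal_mono.2 inter_subset_left)) hg

lemma ContinuousOn.nonneg_or_nonpos_of_ne_zero {g : ℝ → ℝ} {a b : ℝ}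
    (hg : ContinuousOn g (Icc a b)) (ha : g a = 0) (hb : g b = 0)
    (hne : ∀ t ∈ Ioo a b, g t ≠ 0) : (∀ t ∈ Icc a b, 0 ≤ g t) ∨ ∀ t ∈ Icc a b, g t ≤ 0 := by
  by_contra! h
  obtain ⟨⟨x, hx, hgx⟩, y, hy, hgy⟩ := h
  have mem_Ioo : ∀ t ∈ Icc a b, g t ≠ 0 → t ∈ Ioo a b := fun t ht h0 =>
    ⟨ht.1.lt_of_ne (by rintro rfl; exact h0 ha), ht.2.lt_of_ne (by rintro rfl; exact h0 hb)⟩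
  obtain ⟨t, ht, h0⟩ : (0 : ℝ) ∈ g '' Ioo a b :=
    (isPreconnected_Ioo.image g (hg.mono Ioo_subset_Icc_self)).Icc_subset
      (mem_image_of_mem g (mem_Ioo x hx hgx.ne)) (mem_image_of_mem g (mem_Ioo y hy hgy.ne'))
      ⟨hgx.le, hgy.le⟩
  exact hne t ht h0

lemma integral_sq_mul_le_mul_integral_of_nonneg {g w : ℝ → ℝ} {a b B : ℝ} (hab : a ≤ b)
    (hg : ContinuousOn g (Icc a b)) (hw : ContinuousOn w (Icc a b))
    (hw0 : ∀ t ∈ Icc a b, 0 ≤ w t) (hg0 : ∀ t ∈ Icc a b, 0 ≤ g t)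
    (hgB : ∀ t ∈ Icc a b, g t ≤ B) :
    ∫ t in a..b, g t ^ 2 * w t ≤ B * ∫ t in a..b, g t * w t := by
  rw [← integral_const_mul]
  refine integral_mono_on hab (((hg.pow 2).mul hw).intervalIntegrable_of_Icc hab)
    ((continuousOn_const.mul (hg.mul hw)).intervalIntegrable_of_Icc hab) fun t ht => ?_
  rw [sq, mul_assoc]
  exact mul_le_mul_of_nonneg_right (hgB t ht) (mul_nonneg (hg0 t ht) (hw0 t ht))

lemma integral_sq_mul_le_mul_abs_integral {g w : ℝ → ℝ} {a b B : ℝ} (hab : a ≤ b)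
    (hg : ContinuousOn g (Icc a b)) (hw : ContinuousOn w (Icc a b))
    (hw0 : ∀ t ∈ Icc a b, 0 ≤ w t) (hgB : ∀ t ∈ Icc a b, |g t| ≤ B)
    (hsign : (∀ t ∈ Icc a b, 0 ≤ g t) ∨ ∀ t ∈ Icc a b, g t ≤ 0) :
    ∫ t in a..b, g t ^ 2 * w t ≤ B * |∫ t in a..b, g t * w t| := by
  have hB : 0 ≤ B := (abs_nonneg _).trans (hgB a (left_mem_Icc.2 hab))
  rcases hsign with hpos | hneg
  · calc ∫ t in a..b, g t ^ 2 * w t ≤ B * ∫ t in a..b, g t * w t :=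
          integral_sq_mul_le_mul_integral_of_nonneg hab hg hw hw0 hpos fun t ht =>
            (le_abs_self _).trans (hgB t ht)
      _ ≤ B * |∫ t in a..b, g t * w t| := mul_le_mul_of_nonneg_left (le_abs_self _) hB
  · have h := integral_sq_mul_le_mul_integral_of_nonneg hab hg.neg hw hw0
      (fun t ht => neg_nonneg.2 (hneg t ht)) fun t ht => (neg_le_abs _).trans (hgB t ht)
    simp only [Pi.neg_apply, neg_sq, neg_mul, integral_neg] at h
    exact h.trans (mul_le_mul_of_nonneg_left (neg_le_abs _) hB)

lemma mul_integral_eq_sub_of_hasDerivAt {φ w u : ℝ → ℝ} {a b lam : ℝ}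
    (hφ : ∀ t ∈ uIcc a b, HasDerivAt φ (-(lam * w t * u t)) t)
    (hw : ContinuousOn w (uIcc a b)) (hu : ContinuousOn u (uIcc a b)) :
    lam * ∫ t in a..b, u t * w t = φ a - φ b := by
  have h := integral_eq_sub_of_hasDerivAt hφ
    ((continuousOn_const.mul hw).mul hu).neg.intervalIntegrable
  have h' : ∫ t in a..b, -(lam * w t * u t) = -(lam * ∫ t in a..b, u t * w t) := by
    rw [← integral_const_mul, ← integral_neg]
    congr 1
    ext t
    ring
  linarith

lemma mul_le_integral_sq_mul_of_abs_deriv_le {u u' w : ℝ → ℝ} {a b c m L w₀ : ℝ}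
    (hu : ∀ t ∈ Icc a b, HasDerivAt u (u' t) t) (hu'L : ∀ t ∈ Icc a b, |u' t| ≤ L) (hL : 0 < L)
    (hub : u b = 0) (hc : c ∈ Icc a b) (hm : 0 < m) (hmc : m ≤ |u c|)
    (hw : ContinuousOn w (Icc a b)) (hw₀ : 0 ≤ w₀) (hw₀w : ∀ t ∈ Icc a b, w₀ ≤ w t) :
    m / (2 * L) * ((m / 2) ^ 2 * w₀) ≤ ∫ t in a..b, u t ^ 2 * w t := by
  set δ := m / (2 * L) with hδ
  have hlip : ∀ t ∈ Icc a b, |u t - u c| ≤ L * |t - c| := fun t ht => by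
    simpa only [Real.norm_eq_abs] using (convex_Icc a b).norm_image_sub_le_of_norm_hasDerivWithin_le
      (fun x hx => (hu x hx).hasDerivWithinAt) (fun x hx => by simpa using hu'L x hx) hc ht
  have hnear : ∀ t ∈ Icc a b, |t - c| ≤ δ → m / 2 ≤ |u t| := fun t ht htc => by
    have hLδ : L * |t - c| ≤ m / 2 :=
      calc L * |t - c| ≤ L * δ := mul_le_mul_of_nonneg_left htc hL.le
        _ = m / 2 := by rw [hδ]; field_simp
    have := abs_sub_abs_le_abs_sub (u c) (u t)
    rw [abs_sub_comm] at this
    linarith [hlip t ht]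
  have hcb : c + δ ≤ b := by
    by_contra! h
    have := hnear b (right_mem_Icc.2 (hc.1.trans hc.2))
      (by rw [abs_of_nonneg (by linarith [hc.2])]; linarith)
    rw [hub, abs_zero] at this
    linarith
  have hδpos : 0 < δ := by positivity
  have hsub : Icc c (c + δ) ⊆ Icc a b := Icc_subset_Icc hc.1 hcb
  have hcont : ContinuousOn (fun t => u t ^ 2 * w t) (Icc a b) :=
    ((HasDerivAt.continuousOn hu).pow 2).mul hw
  calc δ * ((m / 2) ^ 2 * w₀) = ∫ _ in c..c + δ, (m / 2) ^ 2 * w₀ := by simp; ring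
    _ ≤ ∫ t in c..c + δ, u t ^ 2 * w t := by
      refine integral_mono_on (by linarith) intervalIntegrable_const
        ((hcont.mono hsub).intervalIntegrable_of_Icc (by linarith)) fun t ht => ?_
      have hut : (m / 2) ^ 2 ≤ u t ^ 2 := by
        rw [← sq_abs (u t)]
        exact pow_le_pow_left₀ (by positivity)
          (hnear t (hsub ht) (by rw [abs_of_nonneg (by linarith [ht.1])]; linarith [ht.2])) 2
      exact mul_le_mul hut (hw₀w t (hsub ht)) hw₀ (sq_nonneg _)
    _ ≤ ∫ t in a..b, u t ^ 2 * w t := by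
      refine integral_mono_interval hc.1 (by linarith) hcb ?_
        (hcont.intervalIntegrable_of_Icc (hc.1.trans hc.2))
      filter_upwards [MeasureTheory.ae_restrict_mem measurableSet_Ioc] with t ht
      exact mul_nonneg (sq_nonneg _) (hw₀.trans (hw₀w t (Ioc_subset_Icc_self ht)))

lemma exists_sum_range_le_mul_sum_Ico {x : ℕ → ℝ} {A B : ℝ} (hB : 0 < B)
    (hxB : ∀ k, B ≤ x k) (hxA : ∀ k, x k ≤ A) :
    ∃ c : ℝ, 0 < c ∧ ∀ p : ℕ,
      ∑ k ∈ Finset.range (3 * p), x k ≤ c * ∑ k ∈ Finset.Ico p (2 * p), x k := by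
  have hA : 0 < A := hB.trans_le ((hxB 0).trans (hxA 0))
  refine ⟨3 * A / B, by positivity, fun p => ?_⟩
  calc ∑ k ∈ Finset.range (3 * p), x k ≤ (3 * p : ℕ) • A := by
        simpa using Finset.sum_le_card_nsmul (Finset.range (3 * p)) x A fun k _ => hxA k
    _ = 3 * A / B * (p • B) := by
        simp only [nsmul_eq_mul]; push_cast; field_simp
    _ ≤ 3 * A / B * ∑ k ∈ Finset.Ico p (2 * p), x k := by
        gcongr
        simpa [show 2 * p - p = p by omega] using
          Finset.card_nsmul_le_sum (Finset.Ico p (2 * p)) x B fun k _ => hxB k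

structure IsWeightedSolution (t₀ lam : ℝ) (w w' u u' : ℝ → ℝ) : Prop where
  hasDerivAt_weight : ∀ t ∈ Ici t₀, HasDerivAt w (w' t) t
  weight_pos : ∀ t ∈ Ici t₀, 0 < w t
  weight_mono : MonotoneOn w (Ici t₀)
  hasDerivAt : ∀ t ∈ Ici t₀, HasDerivAt u (u' t) t
  ode : ∀ t ∈ Ici t₀, HasDerivAt (fun s => w s * u' s) (-(lam * w t * u t)) t

def energy (lam : ℝ) (u u' : ℝ → ℝ) (t : ℝ) : ℝ := u' t ^ 2 + lam * u t ^ 2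

namespace IsWeightedSolution

variable {t₀ lam : ℝ} {w w' u u' : ℝ → ℝ}

lemma continuousOn_weight (hs : IsWeightedSolution t₀ lam w w' u u') :
    ContinuousOn w (Ici t₀) :=
  HasDerivAt.continuousOn hs.hasDerivAt_weight

lemma continuousOn (hs : IsWeightedSolution t₀ lam w w' u u') : ContinuousOn u (Ici t₀) :=
  HasDerivAt.continuousOn hs.hasDerivAt

lemma continuousOn_deriv (hs : IsWeightedSolution t₀ lam w w' u u') :
    ContinuousOn u' (Ici t₀) :=
  ((HasDerivAt.continuousOn hs.ode).div hs.continuousOn_weight fun t ht =>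
    (hs.weight_pos t ht).ne').congr fun t ht =>
      (mul_div_cancel_left₀ (u' t) (hs.weight_pos t ht).ne').symm

lemma intervalIntegrable_sq_mul (hs : IsWeightedSolution t₀ lam w w' u u') {a b : ℝ}
    (ha : t₀ ≤ a) (hb : t₀ ≤ b) :
    IntervalIntegrable (fun t => u t ^ 2 * w t) MeasureTheory.volume a b := by
  have hsub : uIcc a b ⊆ Ici t₀ := fun t ht => (le_inf ha hb).trans ht.1
  exact (((hs.continuousOn.mono hsub).pow 2).mul
    (hs.continuousOn_weight.mono hsub)).intervalIntegrable

lemma deriv_weight_nonneg (hs : IsWeightedSolution t₀ lam w w' u u') {t : ℝ} (ht : t₀ < t) :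
    0 ≤ w' t :=
  (hs.hasDerivAt_weight t ht.le).nonneg_of_monotoneOn_Ici_s10 hs.weight_mono ht

lemma hasDerivAt_deriv (hs : IsWeightedSolution t₀ lam w w' u u') {t : ℝ} (ht : t₀ < t) :
    HasDerivAt u' (-(lam * u t) - w' t / w t * u' t) t := by
  have hw : w t ≠ 0 := (hs.weight_pos t ht.le).ne'
  have hquot : (fun s => w s * u' s / w s) =ᶠ[nhds t] u' := by
    filter_upwards [Ioi_mem_nhds ht] with s hs'
    exact mul_div_cancel_left₀ (u' s) (hs.weight_pos s (Ioi_subset_Ici_self hs')).ne'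
  refine (((hs.ode t ht.le).div (hs.hasDerivAt_weight t ht.le) hw).congr_of_eventuallyEq
    hquot.symm).congr_deriv ?_
  field_simp

lemma hasDerivAt_energy (hs : IsWeightedSolution t₀ lam w w' u u') {t : ℝ} (ht : t₀ < t) :
    HasDerivAt (energy lam u u') (-(2 * (w' t / w t) * u' t ^ 2)) t := by
  have h := ((hs.hasDerivAt_deriv ht).pow 2).add (((hs.hasDerivAt t ht.le).pow 2).const_mul lam)
  refine h.congr_deriv ?_
  push_cast
  ring

lemma continuousOn_energy (hs : IsWeightedSolution t₀ lam w w' u u') :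
    ContinuousOn (energy lam u u') (Ici t₀) :=
  (hs.continuousOn_deriv.pow 2).add (continuousOn_const.mul (hs.continuousOn.pow 2))

lemma energy_antitoneOn (hs : IsWeightedSolution t₀ lam w w' u u') :
    AntitoneOn (energy lam u u') (Ici t₀) := by
  refine antitoneOn_of_hasDerivWithinAt_nonpos (f' := fun t => -(2 * (w' t / w t) * u' t ^ 2))
    (convex_Ici t₀) hs.continuousOn_energy
    (fun t ht => ?_) fun t ht => ?_ <;> rw [interior_Ici, mem_Ioi] at ht
  · exact (hs.hasDerivAt_energy ht).hasDerivWithinAt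
  · have := hs.deriv_weight_nonneg ht
    have := hs.weight_pos t ht.le
    have : 0 ≤ 2 * (w' t / w t) * u' t ^ 2 := by positivity
    linarith

lemma sq_weight_mul_energy_monotoneOn (hs : IsWeightedSolution t₀ lam w w' u u')
    (hlam : 0 ≤ lam) : MonotoneOn (fun t => w t ^ 2 * energy lam u u' t) (Ici t₀) := by
  refine monotoneOn_of_hasDerivWithinAt_nonneg (f' := fun t => 2 * lam * w t * w' t * u t ^ 2)
    (convex_Ici t₀) ((hs.continuousOn_weight.pow 2).mul hs.continuousOn_energy)
    (fun t ht => ?_) fun t ht => ?_ <;> rw [interior_Ici, mem_Ioi] at ht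
  · have hw := (hs.weight_pos t ht.le).ne'
    refine (((hs.hasDerivAt_weight t ht.le).fun_pow 2).mul
      (hs.hasDerivAt_energy ht)).hasDerivWithinAt.congr_deriv ?_
    unfold energy
    field_simp
    ring
  · have := hs.deriv_weight_nonneg ht
    have := hs.weight_pos t ht.le
    positivity

lemma energy_le (hs : IsWeightedSolution t₀ lam w w' u u') {t : ℝ} (ht : t₀ ≤ t) :
    energy lam u u' t ≤ energy lam u u' t₀ :=
  hs.energy_antitoneOn self_mem_Ici ht ht

lemma le_energy (hs : IsWeightedSolution t₀ lam w w' u u') (hlam : 0 ≤ lam) {W : ℝ}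
    (hW : ∀ t ∈ Ici t₀, w t ≤ W) {t : ℝ} (ht : t₀ ≤ t) :
    (w t₀ / W) ^ 2 * energy lam u u' t₀ ≤ energy lam u u' t := by
  have hw₀ := hs.weight_pos t₀ self_mem_Ici
  have hwt := hs.weight_pos t ht
  have hE : 0 ≤ energy lam u u' t := by unfold energy; positivity
  rw [div_pow, div_mul_eq_mul_div, div_le_iff₀ (by nlinarith [hW t₀ self_mem_Ici])]
  calc w t₀ ^ 2 * energy lam u u' t₀ ≤ w t ^ 2 * energy lam u u' t :=
        hs.sq_weight_mul_energy_monotoneOn hlam self_mem_Ici ht ht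
    _ ≤ energy lam u u' t * W ^ 2 := by
        rw [mul_comm]
        gcongr
        exact hW t ht

lemma energy_pos (hs : IsWeightedSolution t₀ lam w w' u u') (hlam : 0 < lam)
    (hnontriv : ∃ t ∈ Ici t₀, u t ≠ 0) : 0 < energy lam u u' t₀ := by
  obtain ⟨t, ht, hut⟩ := hnontriv
  have := hs.energy_le ht
  unfold energy at this ⊢
  have : 0 < lam * u t ^ 2 := by positivity
  nlinarith [sq_nonneg (u' t)]

lemma abs_le_sqrt_energy_div (hs : IsWeightedSolution t₀ lam w w' u u') (hlam : 0 < lam)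
    {t : ℝ} (ht : t₀ ≤ t) : |u t| ≤ √(energy lam u u' t₀ / lam) := by
  rw [← sqrt_sq_eq_abs]
  refine sqrt_le_sqrt ?_
  rw [le_div_iff₀ hlam]
  have := hs.energy_le ht
  unfold energy at this ⊢
  nlinarith [sq_nonneg (u' t)]

lemma abs_deriv_le_sqrt_energy (hs : IsWeightedSolution t₀ lam w w' u u') (hlam : 0 ≤ lam)
    {t : ℝ} (ht : t₀ ≤ t) : |u' t| ≤ √(energy lam u u' t₀) := by
  rw [← sqrt_sq_eq_abs]
  refine sqrt_le_sqrt ?_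
  have := hs.energy_le ht
  unfold energy at this ⊢
  nlinarith [sq_nonneg (u t), mul_nonneg hlam (sq_nonneg (u t))]

lemma exists_integral_le_of_zeros (hs : IsWeightedSolution t₀ lam w w' u u') (hlam : 0 < lam)
    {W : ℝ} (hW : ∀ t ∈ Ici t₀, w t ≤ W) :
    ∃ A, ∀ a b, t₀ ≤ a → a ≤ b → u a = 0 → u b = 0 → (∀ t ∈ Ioo a b, u t ≠ 0) →
      ∫ t in a..b, u t ^ 2 * w t ≤ A := by
  set E₀ := energy lam u u' t₀
  refine ⟨√(E₀ / lam) * (2 * (W * √E₀) / lam), fun a b ha hab hua hub hne => ?_⟩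
  have hsub : Icc a b ⊆ Ici t₀ := fun t ht => ha.trans ht.1
  have hcont := hs.continuousOn.mono hsub
  have hflux : ∀ t ∈ Icc a b, |w t * u' t| ≤ W * √E₀ := fun t ht => by
    have hwt := hs.weight_pos t (hsub ht)
    rw [abs_mul, abs_of_pos hwt]
    exact mul_le_mul (hW t (hsub ht)) (hs.abs_deriv_le_sqrt_energy hlam.le (hsub ht))
      (abs_nonneg _) (hwt.le.trans (hW t (hsub ht)))
  have hI : lam * ∫ t in a..b, u t * w t = w a * u' a - w b * u' b :=
    mul_integral_eq_sub_of_hasDerivAt (φ := fun s => w s * u' s)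
      (fun t ht => by rw [uIcc_of_le hab] at ht; exact hs.ode t (hsub ht))
      (by rw [uIcc_of_le hab]; exact hs.continuousOn_weight.mono hsub)
      (by rw [uIcc_of_le hab]; exact hcont)
  calc ∫ t in a..b, u t ^ 2 * w t ≤ √(E₀ / lam) * |∫ t in a..b, u t * w t| :=
        integral_sq_mul_le_mul_abs_integral hab hcont (hs.continuousOn_weight.mono hsub)
          (fun t ht => (hs.weight_pos t (hsub ht)).le)
          (fun t ht => hs.abs_le_sqrt_energy_div hlam (hsub ht))
          (hcont.nonneg_or_nonpos_of_ne_zero hua hub hne)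
    _ ≤ √(E₀ / lam) * (2 * (W * √E₀) / lam) := by
        gcongr
        rw [le_div_iff₀ hlam, mul_comm, ← abs_of_pos hlam, ← abs_mul, hI]
        linarith [abs_sub (w a * u' a) (w b * u' b), hflux a (left_mem_Icc.2 hab),
          hflux b (right_mem_Icc.2 hab)]

lemma exists_pos_le_integral_of_zeros (hs : IsWeightedSolution t₀ lam w w' u u')
    (hlam : 0 < lam) {W : ℝ} (hW : ∀ t ∈ Ici t₀, w t ≤ W)
    (hnontriv : ∃ t ∈ Ici t₀, u t ≠ 0) :
    ∃ B, 0 < B ∧ ∀ a b, t₀ ≤ a → a < b → u a = 0 → u b = 0 →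
      B ≤ ∫ t in a..b, u t ^ 2 * w t := by
  set E₀ := energy lam u u' t₀
  have hE₀ : 0 < E₀ := hs.energy_pos hlam hnontriv
  have hw₀ := hs.weight_pos t₀ self_mem_Ici
  have hW₀ : 0 < W := hw₀.trans_le (hW t₀ self_mem_Ici)
  set m := √((w t₀ / W) ^ 2 * E₀ / lam)
  have hm : 0 < m := sqrt_pos.2 (by positivity)
  refine ⟨m / (2 * √E₀) * ((m / 2) ^ 2 * w t₀), by positivity, fun a b ha hab hua hub => ?_⟩
  have hsub : Icc a b ⊆ Ici t₀ := fun t ht => ha.trans ht.1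
  obtain ⟨c, hc, hc'⟩ := exists_hasDerivAt_eq_zero hab (hs.continuousOn.mono hsub)
    (hua.trans hub.symm) fun t ht => hs.hasDerivAt t (hsub (Ioo_subset_Icc_self ht))
  have hmc : m ≤ |u c| := by
    rw [← sqrt_sq_eq_abs]
    refine sqrt_le_sqrt ?_
    rw [div_le_iff₀ hlam]
    have h : (w t₀ / W) ^ 2 * E₀ ≤ energy lam u u' c :=
      hs.le_energy hlam.le hW (hsub (Ioo_subset_Icc_self hc))
    rw [energy, hc'] at h
    linarith
  exact mul_le_integral_sq_mul_of_abs_deriv_le (fun t ht => hs.hasDerivAt t (hsub ht))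
    (fun t ht => hs.abs_deriv_le_sqrt_energy hlam.le (hsub ht)) (sqrt_pos.2 hE₀) hub
    (Ioo_subset_Icc_self hc) hm hmc (hs.continuousOn_weight.mono hsub) hw₀.le
    fun t ht => hs.weight_mono self_mem_Ici (hsub ht) (hsub ht).out

theorem exists_integral_le_mul_integral (hs : IsWeightedSolution t₀ lam w w' u u')
    (hlam : 0 < lam) {W : ℝ} (hW : ∀ t ∈ Ici t₀, w t ≤ W) (hnontriv : ∃ t ∈ Ici t₀, u t ≠ 0)
    {tseq : ℕ → ℝ} (htseq0 : tseq 0 = t₀) (htseq_mono : StrictMono tseq)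
    (htseq_zero : ∀ k, u (tseq k) = 0) (htseq_all : ∀ s ∈ Ici t₀, u s = 0 → ∃ k, s = tseq k) :
    ∃ c : ℝ, 0 < c ∧ ∀ p : ℕ,
      (∫ t in t₀..tseq (3 * p), u t ^ 2 * w t) ≤
        c * ∫ t in tseq p..tseq (2 * p), u t ^ 2 * w t := by
  have hmem : ∀ k, t₀ ≤ tseq k := fun k => htseq0 ▸ htseq_mono.monotone k.zero_le
  have hne : ∀ k, ∀ t ∈ Ioo (tseq k) (tseq (k + 1)), u t ≠ 0 := by
    rintro k t ⟨hkt, htk⟩ hut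
    obtain ⟨j, rfl⟩ := htseq_all t ((hmem k).trans hkt.le) hut
    have := htseq_mono.lt_iff_lt.1 hkt
    have := htseq_mono.lt_iff_lt.1 htk
    omega
  obtain ⟨A, hA⟩ := hs.exists_integral_le_of_zeros hlam hW
  obtain ⟨B, hB, hB'⟩ := hs.exists_pos_le_integral_of_zeros hlam hW hnontriv
  obtain ⟨c, hc, hsum⟩ := exists_sum_range_le_mul_sum_Ico hB
    (fun k => hB' _ _ (hmem k) (htseq_mono k.lt_succ_self) (htseq_zero k) (htseq_zero (k + 1)))
    (fun k => hA _ _ (hmem k) (htseq_mono k.lt_succ_self).le (htseq_zero k)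
      (htseq_zero (k + 1)) (hne k))
  have hsplit : ∀ i j, i ≤ j → ∫ t in tseq i..tseq j, u t ^ 2 * w t =
      ∑ k ∈ Finset.Ico i j, ∫ t in tseq k..tseq (k + 1), u t ^ 2 * w t := fun i j hij =>
    (sum_integral_adjacent_intervals_Ico hij fun k _ =>
      hs.intervalIntegrable_sq_mul (hmem k) (hmem (k + 1))).symm
  refine ⟨c, hc, fun p => ?_⟩
  rw [← htseq0, hsplit _ _ (Nat.zero_le _), hsplit _ _ (by omega), ← Finset.range_eq_Ico]
  exact hsum p

end IsWeightedSolution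

theorem stmt10_general (t₀ R lam : ℝ) (n : ℕ) (hlam : 0 < lam)
    (r r' u u' : ℝ → ℝ)
    (hr : ∀ t ∈ Ici t₀, HasDerivAt r (r' t) t)
    (hr_mono : StrictMonoOn r (Ici t₀))
    (hr_bd : ∀ t ∈ Ici t₀, 0 < r t ∧ r t < R)
    (hu : ∀ t ∈ Ici t₀, HasDerivAt u (u' t) t)
    (hode : ∀ t ∈ Ici t₀,
      HasDerivAt (fun s => r s ^ (n - 1) * u' s) (-(lam * r t ^ (n - 1) * u t)) t)
    (hnontriv : ∃ t ∈ Ici t₀, u t ≠ 0)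
    (tseq : ℕ → ℝ) (htseq0 : tseq 0 = t₀) (htseq_mono : StrictMono tseq)
    (htseq_zero : ∀ k, u (tseq k) = 0)
    (htseq_all : ∀ s ∈ Ici t₀, u s = 0 → ∃ k, s = tseq k) :
    ∃ c : ℝ, 0 < c ∧ ∀ p : ℕ,
      (∫ t in t₀..tseq (3 * p), u t ^ 2 * r t ^ (n - 1)) ≤
        c * ∫ t in tseq p..tseq (2 * p), u t ^ 2 * r t ^ (n - 1) := by
  have hs : IsWeightedSolution t₀ lam (fun t => r t ^ (n - 1))
      (fun t => (n - 1 : ℕ) * r t ^ (n - 1 - 1) * r' t) u u' :=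
    { hasDerivAt_weight := fun t ht => (hr t ht).pow (n - 1)
      weight_pos := fun t ht => pow_pos (hr_bd t ht).1 _
      weight_mono := fun s hs t ht hst =>
        pow_le_pow_left₀ (hr_bd s hs).1.le (hr_mono.monotoneOn hs ht hst) _
      hasDerivAt := hu
      ode := hode }
  exact hs.exists_integral_le_mul_integral hlam
    (fun t ht => pow_le_pow_left₀ (hr_bd t ht).1.le (hr_bd t ht).2.le _) hnontriv htseq0
    htseq_mono htseq_zero htseq_all

/-- Lemma: `∫_{t₀}^{t_{3p}} u² r^{n-1} ≤ c ∫_{t_p}^{t_{2p}} u² r^{n-1}` with `c` independent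
of `p`. -/
theorem stmt10 (t₀ R lam : ℝ) (n : ℕ) (hn : 2 ≤ n) (hR : 0 < R) (hlam : 0 < lam)
    (r r' u u' : ℝ → ℝ)
    (hr : ∀ t ∈ Ici t₀, HasDerivAt r (r' t) t)
    (hr'_cont : ContinuousOn r' (Ici t₀))
    (hr_mono : StrictMonoOn r (Ici t₀))
    (hr_bd : ∀ t ∈ Ici t₀, 0 < r t ∧ r t < R)
    (hu : ∀ t ∈ Ici t₀, HasDerivAt u (u' t) t)
    (hode : ∀ t ∈ Ici t₀,
      HasDerivAt (fun s => r s ^ (n - 1) * u' s) (-(lam * r t ^ (n - 1) * u t)) t)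
    (hu0 : u t₀ = 0)
    (hnontriv : ∃ t ∈ Ici t₀, u t ≠ 0)
    (tseq : ℕ → ℝ) (htseq0 : tseq 0 = t₀) (htseq_mono : StrictMono tseq)
    (htseq_mem : ∀ k, tseq k ∈ Ici t₀)
    (htseq_zero : ∀ k, u (tseq k) = 0)
    (htseq_all : ∀ s ∈ Ici t₀, u s = 0 → ∃ k, s = tseq k) :
    ∃ c : ℝ, 0 < c ∧ ∀ p : ℕ,
      (∫ t in t₀..tseq (3 * p), u t ^ 2 * r t ^ (n - 1)) ≤
        c * ∫ t in tseq p..tseq (2 * p), u t ^ 2 * r t ^ (n - 1) :=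
  stmt10_general t₀ R lam n hlam r r' u u' hr hr_mono hr_bd hu hode hnontriv tseq htseq0 htseq_mono
    htseq_zero htseq_all
end

section
/- Let p be continuous and positive on (a, b) and let x, y be C¹ functions on (a, b) with p x' and p y' differentiable, satisfying (p x')' + q x = 0 and (p y')' + q₁ y = 0 with y nonvanishing on (a, b). Then the function t ↦ x(t)·(p(t)x'(t)y(t) − p(t)x(t)y'(t))/y(t) has derivative (q₁ − q)x² + p·(x'y − xy')²/y² at each point of (a, b). -/
open Set

theorem hasDerivAt_picone {𝕜 : Type*} [NontriviallyNormedField 𝕜]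
    {p q q₁ x x' y y' : 𝕜 → 𝕜} {t : 𝕜}
    (hx : HasDerivAt x (x' t) t) (hpx : HasDerivAt (fun s => p s * x' s) (-(q t * x t)) t)
    (hy : HasDerivAt y (y' t) t) (hpy : HasDerivAt (fun s => p s * y' s) (-(q₁ t * y t)) t)
    (hyt : y t ≠ 0) :
    HasDerivAt (fun s => x s * (p s * x' s * y s - p s * x s * y' s) / y s)
      ((q₁ t - q t) * x t ^ 2 + p t * (x' t * y t - x t * y' t) ^ 2 / y t ^ 2) t := by
  -- Regroup so that only the quasi-derivatives `p x'` and `p y'` are differentiated.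
  have hregroup : (fun s => x s * (p s * x' s * y s - p s * x s * y' s) / y s) =
      fun s => x s * ((p s * x' s) * y s - x s * (p s * y' s)) / y s := by
    funext s; ring
  rw [hregroup]
  refine ((hx.fun_mul ((hpx.fun_mul hy).fun_sub (hx.fun_mul hpy))).fun_div hy hyt).congr_deriv ?_
  field_simp
  ring

theorem stmt15_general (a b : ℝ)
    (p q q₁ x x' y y' : ℝ → ℝ)
    (hx : ∀ t ∈ Ioo a b, HasDerivAt x (x' t) t)
    (hxode : ∀ t ∈ Ioo a b, HasDerivAt (fun s => p s * x' s) (-(q t * x t)) t)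
    (hy : ∀ t ∈ Ioo a b, HasDerivAt y (y' t) t)
    (hyode : ∀ t ∈ Ioo a b, HasDerivAt (fun s => p s * y' s) (-(q₁ t * y t)) t)
    (hy_ne : ∀ t ∈ Ioo a b, y t ≠ 0) :
    ∀ t ∈ Ioo a b,
      HasDerivAt (fun s => x s * (p s * x' s * y s - p s * x s * y' s) / y s)
        ((q₁ t - q t) * x t ^ 2 + p t * (x' t * y t - x t * y' t) ^ 2 / y t ^ 2) t :=
  fun t ht => hasDerivAt_picone (hx t ht) (hxode t ht) (hy t ht) (hyode t ht) (hy_ne t ht)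

/-- Picone identity (case `p = p₁`): the function
`t ↦ x (p x' y − p x y')/y` has derivative `(q₁ − q)x² + p (x'y − xy')²/y²`. -/
theorem stmt15 (a b : ℝ) (hab : a < b)
    (p q q₁ x x' y y' : ℝ → ℝ)
    (hp_cont : ContinuousOn p (Ioo a b)) (hp_pos : ∀ t ∈ Ioo a b, 0 < p t)
    (hq_cont : ContinuousOn q (Ioo a b)) (hq₁_cont : ContinuousOn q₁ (Ioo a b))
    (hx : ∀ t ∈ Ioo a b, HasDerivAt x (x' t) t)
    (hxode : ∀ t ∈ Ioo a b, HasDerivAt (fun s => p s * x' s) (-(q t * x t)) t)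
    (hy : ∀ t ∈ Ioo a b, HasDerivAt y (y' t) t)
    (hyode : ∀ t ∈ Ioo a b, HasDerivAt (fun s => p s * y' s) (-(q₁ t * y t)) t)
    (hy_ne : ∀ t ∈ Ioo a b, y t ≠ 0) :
    ∀ t ∈ Ioo a b,
      HasDerivAt (fun s => x s * (p s * x' s * y s - p s * x s * y' s) / y s)
        ((q₁ t - q t) * x t ^ 2 + p t * (x' t * y t - x t * y' t) ^ 2 / y t ^ 2) t :=
  stmt15_general a b p q q₁ x x' y y' hx hxode hy hyode hy_ne
end

section
/- Let r be C¹, increasing, with 0 < r(t) < R on [t₀, ∞), n ≥ 2, λ > 0, and let u solve (r^{n-1} u')' + λ r^{n-1} u = 0 with u(t₀) = 0, u'(t₀) > 0, and zeros t₀ < t₁ < ⋯. Then there is a constant C = C(λ, R, n, r(t₀)) such that for every p ∈ ℕ: ∫_{t₀}^{t_{3p}} u² r^{n-1} dt ≤ C · Σ_{k=0}^{3p-1} u'(t_k)². -/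
/-!
Write `P = r^{n-1}`. Since `P` is increasing, the energy `u'² + λu²` is nonincreasing, so on
`[t_k, t_{k+1}]` we have `λu² ≤ u'(t_k)²` and hence `u² P ≤ R^{n-1} u'(t_k)² / λ`. With
`κ = r(t₀)^{n-1} √λ`, the function `sin (∫ κ / P)` solves `(P v')' + (κ² / P) v = 0`, whose
coefficient is dominated by `λ P`; Sturm comparison against it shows that consecutive zeros of
`u` are at most `R^{n-1} π / κ` apart. Integrating over each `[t_k, t_{k+1}]` and summing gives
the bound.
-/

open Set Real intervalIntegral

lemma IsPreconnected.mul_pos_of_ne_zero {X : Type*} [TopologicalSpace X] {s : Set X}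
    {f : X → ℝ} (hs : IsPreconnected s) (hf : ContinuousOn f s) (hne : ∀ x ∈ s, f x ≠ 0)
    {x y : X} (hx : x ∈ s) (hy : y ∈ s) : 0 < f x * f y := by
  by_contra! h
  rcases le_total (f x) (f y) with hxy | hxy
  · obtain ⟨z, hz, hz0⟩ := hs.intermediate_value hx hy hf
      (show (0 : ℝ) ∈ Icc (f x) (f y) from ⟨by nlinarith, by nlinarith⟩)
    exact hne z hz hz0
  · obtain ⟨z, hz, hz0⟩ := hs.intermediate_value hy hx hf
      (show (0 : ℝ) ∈ Icc (f y) (f x) from ⟨by nlinarith, by nlinarith⟩)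
    exact hne z hz hz0

section

variable {P u u' φ : ℝ → ℝ} {tseq : ℕ → ℝ} {a b c t₀ κ lam m M L : ℝ}

/-- The weighted Wronskian `P (u' v - u v')` of `u` and `v = sin ∘ φ` when `P φ' = κ`. -/
noncomputable def phaseWronskian (P u u' φ : ℝ → ℝ) (κ t : ℝ) : ℝ :=
  P t * u' t * sin (φ t) - κ * u t * cos (φ t)

lemma hasDerivAt_phaseWronskian {x : ℝ} (hPx : P x ≠ 0) (hφ : HasDerivAt φ (κ / P x) x)
    (hu : HasDerivAt u (u' x) x)
    (hode : HasDerivAt (fun t => P t * u' t) (-(lam * P x * u x)) x) :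
    HasDerivAt (phaseWronskian P u u' φ κ)
      (-(u x * sin (φ x)) * ((lam * P x ^ 2 - κ ^ 2) / P x)) x := by
  refine ((hode.mul hφ.sin).sub ((hu.const_mul κ).mul hφ.cos)).congr_deriv ?_
  field_simp
  ring

lemma eq_zero_of_phase_eq_pi (hac : a ≤ c) (hκ : 0 < κ)
    (hP : ∀ x ∈ Ioo a c, 0 < P x) (hκP : ∀ x ∈ Ioo a c, κ ^ 2 ≤ lam * P x ^ 2)
    (hφ : ContinuousOn φ (Icc a c)) (hφ' : ∀ x ∈ Ioo a c, HasDerivAt φ (κ / P x) x)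
    (hφa : φ a = 0) (hφc : φ c = π)
    (hu : ContinuousOn u (Icc a c)) (hu' : ∀ x ∈ Ioo a c, HasDerivAt u (u' x) x)
    (hPu' : ContinuousOn (fun t => P t * u' t) (Icc a c))
    (hode : ∀ x ∈ Ioo a c, HasDerivAt (fun t => P t * u' t) (-(lam * P x * u x)) x)
    (hua : u a = 0) (hsign : ∀ x ∈ Ioo a c, 0 ≤ u x * u c) :
    u c = 0 := by
  have hφmono : MonotoneOn φ (Icc a c) := by
    refine monotoneOn_of_hasDerivWithinAt_nonneg (f' := fun x => κ / P x) (convex_Icc a c) hφ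
      (fun x hx => ?_) (fun x hx => ?_) <;> rw [interior_Icc] at hx
    · exact (hφ' x hx).hasDerivWithinAt
    · exact (div_pos hκ (hP x hx)).le
  have hW : ContinuousOn (fun t => u c * phaseWronskian P u u' φ κ t) (Icc a c) :=
    continuousOn_const.mul <| (hPu'.mul (continuous_sin.comp_continuousOn hφ)).sub
      ((continuousOn_const.mul hu).mul (continuous_cos.comp_continuousOn hφ))
  have hanti : AntitoneOn (fun t => u c * phaseWronskian P u u' φ κ t) (Icc a c) := by
    refine antitoneOn_of_hasDerivWithinAt_nonpos (convex_Icc a c) hW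
      (f' := fun x => u c * (-(u x * sin (φ x)) * ((lam * P x ^ 2 - κ ^ 2) / P x)))
      (fun x hx => ?_) (fun x hx => ?_) <;> rw [interior_Icc] at hx
    · exact ((hasDerivAt_phaseWronskian (hP x hx).ne' (hφ' x hx) (hu' x hx)
        (hode x hx)).const_mul (u c)).hasDerivWithinAt
    · have hφx : φ x ∈ Icc 0 π := hφa ▸ hφc ▸
        ⟨hφmono (left_mem_Icc.2 hac) (Ioo_subset_Icc_self hx) hx.1.le,
          hφmono (Ioo_subset_Icc_self hx) (right_mem_Icc.2 hac) hx.2.le⟩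
      have hsin : 0 ≤ sin (φ x) := sin_nonneg_of_nonneg_of_le_pi hφx.1 hφx.2
      have hgap : 0 ≤ (lam * P x ^ 2 - κ ^ 2) / P x :=
        div_nonneg (sub_nonneg.2 (hκP x hx)) (hP x hx).le
      have := mul_nonneg (mul_nonneg (hsign x hx) hsin) hgap
      linarith
  have hend := hanti (left_mem_Icc.2 hac) (right_mem_Icc.2 hac) hac
  simp only [phaseWronskian, hφa, hφc, hua, sin_zero, cos_zero, sin_pi, cos_pi] at hend
  have : κ * u c ^ 2 ≤ 0 := by linarith
  exact pow_eq_zero_iff two_ne_zero |>.1 <|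
    le_antisymm (nonpos_of_mul_nonpos_right this hκ) (sq_nonneg _)

theorem exists_zero_Ioc_of_length_le (hab : a ≤ b) (hlam : 0 < lam) (hm : 0 < m)
    (hP : ContinuousOn P (Icc a b)) (hPm : ∀ t ∈ Icc a b, m ≤ P t)
    (hPM : ∀ t ∈ Icc a b, P t ≤ M)
    (hu : ContinuousOn u (Icc a b)) (hu' : ∀ t ∈ Ioo a b, HasDerivAt u (u' t) t)
    (hPu' : ContinuousOn (fun t => P t * u' t) (Icc a b))
    (hode : ∀ t ∈ Ioo a b, HasDerivAt (fun t => P t * u' t) (-(lam * P t * u t)) t)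
    (hL : M * π / (m * √lam) ≤ b - a) (hua : u a = 0) :
    ∃ z ∈ Ioc a b, u z = 0 := by
  by_contra! hne
  set κ := m * √lam
  have hκ : 0 < κ := mul_pos hm (sqrt_pos.2 hlam)
  have hPpos : ∀ t ∈ Icc a b, 0 < P t := fun t ht => hm.trans_le (hPm t ht)
  have hM : 0 < M := (hPpos a (left_mem_Icc.2 hab)).trans_le (hPM a (left_mem_Icc.2 hab))
  -- Prüfer phase: `sin ∘ φ` solves `(P v')' + (κ² / P) v = 0`, and `κ² / P ≤ λ P`.
  set φ : ℝ → ℝ := fun t => ∫ x in a..t, κ / P x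
  have hcont : ContinuousOn (fun x => κ / P x) (Icc a b) :=
    continuousOn_const.div hP fun t ht => (hPpos t ht).ne'
  have hint : IntervalIntegrable (fun x => κ / P x) MeasureTheory.volume a b :=
    hcont.intervalIntegrable_of_Icc hab
  have hφ : ContinuousOn φ (Icc a b) := by
    have := continuousOn_primitive_interval' hint left_mem_uIcc
    rwa [uIcc_of_le hab] at this
  have hφ' : ∀ x ∈ Ioo a b, HasDerivAt φ (κ / P x) x := fun x hx =>
    integral_hasDerivAt_right
      (hint.mono_set (uIcc_subset_uIcc_left (Icc_subset_uIcc (Ioo_subset_Icc_self hx))))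
      ((hcont.mono Ioo_subset_Icc_self).stronglyMeasurableAtFilter isOpen_Ioo x hx)
      ((hcont.mono Ioo_subset_Icc_self).continuousAt (isOpen_Ioo.mem_nhds hx))
  have hφb : π ≤ φ b := by
    have hmono := integral_mono_on hab (intervalIntegrable_const (c := κ / M)) hint fun t ht =>
      div_le_div_of_nonneg_left hκ.le (hPpos t ht) (hPM t ht)
    rw [integral_const, smul_eq_mul] at hmono
    calc π = M * π / κ * (κ / M) := by field_simp
      _ ≤ (b - a) * (κ / M) := by gcongr
      _ ≤ φ b := hmono
  obtain ⟨c, hc, hφc⟩ := intermediate_value_Icc hab hφ ⟨by simp [φ, pi_pos.le], hφb⟩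
  have hac : a < c := hc.1.lt_of_ne <| by rintro rfl; simp [φ, pi_ne_zero.symm] at hφc
  have hIoc : Ioc a c ⊆ Ioc a b := Ioc_subset_Ioc_right hc.2
  have hIcc : Icc a c ⊆ Icc a b := Icc_subset_Icc_right hc.2
  have hIoo : Ioo a c ⊆ Ioo a b := Ioo_subset_Ioo_right hc.2
  refine hne c ⟨hac, hc.2⟩ (eq_zero_of_phase_eq_pi hac.le hκ
    (fun x hx => hPpos x (Ioo_subset_Icc_self (hIoo hx))) (fun x hx => ?_) (hφ.mono hIcc)
    (fun x hx => hφ' x (hIoo hx)) integral_same hφc (hu.mono hIcc)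
    (fun x hx => hu' x (hIoo hx)) (hPu'.mono hIcc) (fun x hx => hode x (hIoo hx)) hua
    (fun x hx => ?_))
  · have hmP := hPm x (Ioo_subset_Icc_self (hIoo hx))
    have : κ ^ 2 = m ^ 2 * lam := by rw [mul_pow, sq_sqrt hlam.le]
    rw [this, mul_comm]
    exact mul_le_mul_of_nonneg_left (pow_le_pow_left₀ hm.le hmP 2) hlam.le
  · exact (isPreconnected_Ioc.mul_pos_of_ne_zero ((hu.mono Ioc_subset_Icc_self).mono hIoc)
      (fun z hz => hne z (hIoc hz)) (Ioo_subset_Ioc_self hx) ⟨hac, le_rfl⟩).le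

theorem antitoneOn_energy_s17 {s : Set ℝ} (hs : Convex ℝ s)
    (hP : ∀ t ∈ s, DifferentiableAt ℝ P t) (hPpos : ∀ t ∈ s, 0 < P t)
    (hPmono : MonotoneOn P s)
    (hu : ∀ t ∈ s, HasDerivAt u (u' t) t)
    (hode : ∀ t ∈ s, HasDerivAt (fun t => P t * u' t) (-(lam * P t * u t)) t) :
    AntitoneOn (fun t => u' t ^ 2 + lam * u t ^ 2) s := by
  have hu'eq : EqOn u' (fun t => P t * u' t / P t) s := fun t ht =>
    (mul_div_cancel_left₀ _ (hPpos t ht).ne').symm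
  have hucont : ContinuousOn u s := fun t ht => (hu t ht).continuousAt.continuousWithinAt
  have hu'cont : ContinuousOn u' s :=
    (ContinuousOn.div (fun t ht => (hode t ht).continuousAt.continuousWithinAt)
      (fun t ht => (hP t ht).continuousAt.continuousWithinAt)
      (fun t ht => (hPpos t ht).ne')).congr hu'eq
  refine antitoneOn_of_hasDerivWithinAt_nonpos hs
    ((hu'cont.pow 2).add (continuousOn_const.mul (hucont.pow 2)))
    (f' := fun x => -(2 * deriv P x * u' x ^ 2 / P x)) (fun x hx => ?_) (fun x hx => ?_)
  all_goals have hxs := interior_subset hx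
  · have hu'' : HasDerivAt u'
        ((-(lam * P x * u x) * P x - P x * u' x * deriv P x) / P x ^ 2) x :=
      ((hode x hxs).div (hP x hxs).hasDerivAt (hPpos x hxs).ne').congr_of_eventuallyEq
        (hu'eq.eventuallyEq_of_mem (mem_interior_iff_mem_nhds.1 hx))
    have hPx := (hPpos x hxs).ne'
    refine (((hu''.pow 2).add (((hu x hxs).pow 2).const_mul lam)).congr_deriv ?_).hasDerivWithinAt
    field_simp
    ring
  · have hP' : 0 ≤ deriv P x := (hP x hxs).hasDerivAt.hasDerivWithinAt.nonneg_of_monotoneOn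
      (isOpen_interior.preperfect x hx) (hPmono.mono interior_subset)
    have := (hPpos x hxs).le
    exact neg_nonpos.2 (by positivity)

theorem integral_sq_mul_le_of_antitoneOn_energy (hab : a ≤ b) (hlam : 0 < lam)
    (hP : ContinuousOn P (Icc a b)) (hP0 : ∀ t ∈ Icc a b, 0 ≤ P t)
    (hPM : ∀ t ∈ Icc a b, P t ≤ M) (hu : ContinuousOn u (Icc a b))
    (henergy : AntitoneOn (fun t => u' t ^ 2 + lam * u t ^ 2) (Icc a b)) (hua : u a = 0) :
    ∫ t in a..b, u t ^ 2 * P t ≤ (b - a) * M / lam * u' a ^ 2 := by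
  have hpt : ∀ t ∈ Icc a b, u t ^ 2 * P t ≤ u' a ^ 2 / lam * M := by
    intro t ht
    have hE := henergy (left_mem_Icc.2 hab) ht ht.1
    simp only [hua] at hE
    have hut : u t ^ 2 ≤ u' a ^ 2 / lam := by
      rw [le_div_iff₀ hlam]
      nlinarith [sq_nonneg (u' t)]
    exact mul_le_mul hut (hPM t ht) (hP0 t ht) ((sq_nonneg _).trans hut)
  calc ∫ t in a..b, u t ^ 2 * P t ≤ ∫ _ in a..b, u' a ^ 2 / lam * M :=
        integral_mono_on hab (((hu.pow 2).mul hP).intervalIntegrable_of_Icc hab)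
          intervalIntegrable_const hpt
    _ = (b - a) * M / lam * u' a ^ 2 := by rw [integral_const, smul_eq_mul]; ring

theorem succ_sub_le_of_enumerates_zeros (hlam : 0 < lam) (hm : 0 < m)
    (hP : ContinuousOn P (Ici t₀)) (hPm : ∀ t ∈ Ici t₀, m ≤ P t)
    (hPM : ∀ t ∈ Ici t₀, P t ≤ M)
    (hu : ∀ t ∈ Ici t₀, HasDerivAt u (u' t) t)
    (hode : ∀ t ∈ Ici t₀, HasDerivAt (fun t => P t * u' t) (-(lam * P t * u t)) t)
    (htseq_mono : StrictMono tseq) (htseq_mem : ∀ k, tseq k ∈ Ici t₀)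
    (htseq_zero : ∀ k, u (tseq k) = 0)
    (htseq_all : ∀ s ∈ Ici t₀, u s = 0 → ∃ k, s = tseq k)
    (k : ℕ) : tseq (k + 1) - tseq k ≤ M * π / (m * √lam) := by
  set b := tseq k + M * π / (m * √lam)
  have hsub : Icc (tseq k) b ⊆ Ici t₀ := fun x hx => (htseq_mem k).trans hx.1
  have hM : 0 < M := hm.trans_le ((hPm t₀ self_mem_Ici).trans (hPM t₀ self_mem_Ici))
  have hkb : tseq k ≤ b := le_add_of_nonneg_right (by positivity)
  obtain ⟨z, hz, hz0⟩ := exists_zero_Ioc_of_length_le hkb hlam hm (hP.mono hsub)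
    (fun t ht => hPm t (hsub ht)) (fun t ht => hPM t (hsub ht))
    (fun t ht => (hu t (hsub ht)).continuousAt.continuousWithinAt)
    (fun t ht => hu t (hsub (Ioo_subset_Icc_self ht)))
    (fun t ht => (hode t (hsub ht)).continuousAt.continuousWithinAt)
    (fun t ht => hode t (hsub (Ioo_subset_Icc_self ht))) (by simp [b]) (htseq_zero k)
  obtain ⟨j, rfl⟩ := htseq_all z (hsub (Ioc_subset_Icc_self hz)) hz0
  have hkj : k + 1 ≤ j := htseq_mono.lt_iff_lt.1 hz.1
  linarith [htseq_mono.monotone hkj, hz.2]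

theorem integral_sq_mul_le_mul_sum_sq_deriv (hlam : 0 < lam)
    (hP : ContinuousOn P (Ici t₀)) (hP0 : ∀ t ∈ Ici t₀, 0 ≤ P t)
    (hPM : ∀ t ∈ Ici t₀, P t ≤ M)
    (hu : ContinuousOn u (Ici t₀))
    (henergy : AntitoneOn (fun t => u' t ^ 2 + lam * u t ^ 2) (Ici t₀))
    (htseq_mono : Monotone tseq) (htseq_mem : ∀ k, tseq k ∈ Ici t₀)
    (htseq_zero : ∀ k, u (tseq k) = 0) (hgap : ∀ k, tseq (k + 1) - tseq k ≤ L) (N : ℕ) :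
    ∫ t in tseq 0..tseq N, u t ^ 2 * P t ≤
      M * L / lam * ∑ k ∈ Finset.range N, u' (tseq k) ^ 2 := by
  have hsub : ∀ k, Icc (tseq k) (tseq (k + 1)) ⊆ Ici t₀ := fun k x hx =>
    (htseq_mem k).trans hx.1
  have hM : 0 ≤ M := (hP0 t₀ self_mem_Ici).trans (hPM t₀ self_mem_Ici)
  have hseg : ∀ k, ∫ t in tseq k..tseq (k + 1), u t ^ 2 * P t ≤
      M * L / lam * u' (tseq k) ^ 2 := by
    intro k
    calc _ ≤ (tseq (k + 1) - tseq k) * M / lam * u' (tseq k) ^ 2 :=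
          integral_sq_mul_le_of_antitoneOn_energy (htseq_mono k.le_succ) hlam (hP.mono (hsub k))
            (fun t ht => hP0 t (hsub k ht)) (fun t ht => hPM t (hsub k ht)) (hu.mono (hsub k))
            (henergy.mono (hsub k)) (htseq_zero k)
      _ ≤ M * L / lam * u' (tseq k) ^ 2 := by
          rw [mul_comm _ M]
          gcongr
          exact hgap k
  rw [← sum_integral_adjacent_intervals (f := fun t => u t ^ 2 * P t) fun k _ =>
    (((hu.pow 2).mul hP).mono (hsub k)).intervalIntegrable_of_Icc (htseq_mono k.le_succ),
    Finset.mul_sum]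
  exact Finset.sum_le_sum fun k _ => hseg k

end

theorem stmt17_general (t₀ R lam : ℝ) (n : ℕ) (hR : 0 < R) (hlam : 0 < lam)
    (r r' u u' : ℝ → ℝ)
    (hr : ∀ t ∈ Ici t₀, HasDerivAt r (r' t) t)
    (hr_mono : StrictMonoOn r (Ici t₀))
    (hr_bd : ∀ t ∈ Ici t₀, 0 < r t ∧ r t < R)
    (hu : ∀ t ∈ Ici t₀, HasDerivAt u (u' t) t)
    (hode : ∀ t ∈ Ici t₀,
      HasDerivAt (fun s => r s ^ (n - 1) * u' s) (-(lam * r t ^ (n - 1) * u t)) t)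
    (tseq : ℕ → ℝ) (htseq0 : tseq 0 = t₀) (htseq_mono : StrictMono tseq)
    (htseq_mem : ∀ k, tseq k ∈ Ici t₀)
    (htseq_zero : ∀ k, u (tseq k) = 0)
    (htseq_all : ∀ s ∈ Ici t₀, u s = 0 → ∃ k, s = tseq k) :
    ∃ C : ℝ, 0 < C ∧ ∀ p : ℕ,
      (∫ t in t₀..tseq (3 * p), u t ^ 2 * r t ^ (n - 1)) ≤
        C * ∑ k ∈ Finset.range (3 * p), u' (tseq k) ^ 2 := by
  have hr₀ : 0 < r t₀ := (hr_bd t₀ self_mem_Ici).1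
  have hPd : ∀ t ∈ Ici t₀, DifferentiableAt ℝ (fun t => r t ^ (n - 1)) t :=
    fun t ht => (hr t ht).differentiableAt.pow _
  have hP : ContinuousOn (fun t => r t ^ (n - 1)) (Ici t₀) :=
    fun t ht => (hPd t ht).continuousAt.continuousWithinAt
  have hPmono : MonotoneOn (fun t => r t ^ (n - 1)) (Ici t₀) := fun x hx y hy hxy =>
    pow_le_pow_left₀ (hr_bd x hx).1.le (hr_mono.monotoneOn hx hy hxy) _
  have hPM : ∀ t ∈ Ici t₀, r t ^ (n - 1) ≤ R ^ (n - 1) :=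
    fun t ht => pow_le_pow_left₀ (hr_bd t ht).1.le (hr_bd t ht).2.le _
  have hgap := succ_sub_le_of_enumerates_zeros hlam (pow_pos hr₀ _) hP
    (fun t ht => hPmono self_mem_Ici ht ht) hPM hu hode htseq_mono htseq_mem htseq_zero htseq_all
  have henergy := antitoneOn_energy_s17 (convex_Ici t₀) hPd (fun t ht => pow_pos (hr_bd t ht).1 _)
    hPmono hu hode
  refine ⟨R ^ (n - 1) * (R ^ (n - 1) * π / (r t₀ ^ (n - 1) * √lam)) / lam, by positivity,
    fun p => ?_⟩
  have := integral_sq_mul_le_mul_sum_sq_deriv hlam hP (fun t ht => (pow_pos (hr_bd t ht).1 _).le)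
    hPM (fun t ht => (hu t ht).continuousAt.continuousWithinAt) henergy htseq_mono.monotone
    htseq_mem htseq_zero hgap (3 * p)
  rwa [htseq0] at this

/-- `∫_{t₀}^{t_{3p}} u² r^{n-1} ≤ C · Σ_{k=0}^{3p-1} u'(t_k)²` with `C` independent of `p`. -/
theorem stmt17 (t₀ R lam : ℝ) (n : ℕ) (hn : 2 ≤ n) (hR : 0 < R) (hlam : 0 < lam)
    (r r' u u' : ℝ → ℝ)
    (hr : ∀ t ∈ Ici t₀, HasDerivAt r (r' t) t)
    (hr'_cont : ContinuousOn r' (Ici t₀))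
    (hr_mono : StrictMonoOn r (Ici t₀))
    (hr_bd : ∀ t ∈ Ici t₀, 0 < r t ∧ r t < R)
    (hu : ∀ t ∈ Ici t₀, HasDerivAt u (u' t) t)
    (hode : ∀ t ∈ Ici t₀,
      HasDerivAt (fun s => r s ^ (n - 1) * u' s) (-(lam * r t ^ (n - 1) * u t)) t)
    (hu0 : u t₀ = 0) (hu'0 : 0 < u' t₀)
    (tseq : ℕ → ℝ) (htseq0 : tseq 0 = t₀) (htseq_mono : StrictMono tseq)
    (htseq_mem : ∀ k, tseq k ∈ Ici t₀)
    (htseq_zero : ∀ k, u (tseq k) = 0)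
    (htseq_all : ∀ s ∈ Ici t₀, u s = 0 → ∃ k, s = tseq k) :
    ∃ C : ℝ, 0 < C ∧ ∀ p : ℕ,
      (∫ t in t₀..tseq (3 * p), u t ^ 2 * r t ^ (n - 1)) ≤
        C * ∑ k ∈ Finset.range (3 * p), u' (tseq k) ^ 2 :=
  stmt17_general t₀ R lam n hR hlam r r' u u' hr hr_mono hr_bd hu hode tseq htseq0 htseq_mono
    htseq_mem htseq_zero htseq_all
end
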